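/- arXiv:2106.11866 — 6 statements merged into one kernel-verified Lean document; each statement's English description precedes it below -/
import Mathlib

section
/- For any n-vector d with d_i ≥ d_j > 0, the optimal scores satisfy f(d - δ_i) ≤ f(d - δ_j) and F(d - δ_i) ≥ F(d - δ_j), where f(d) = min_S max_G E[C(d,G,S)] and F(d) = max_S min_G E[C(d,G,S)]. -/
open Finset

abbrev Deck (n : ℕ) := Fin n → ℕ
abbrev Strat (n : ℕ) := Deck n → Fin n → ℝ

/-- Remove one copy of card type `j` from the deck. -/
def Deck.sub {n : ℕ} (d : Deck n) (j : Fin n) : Deck n :=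
  fun i => if i = j then d i - 1 else d i

/-- `p` is a probability distribution on `Fin n`. -/
def IsDist {n : ℕ} (p : Fin n → ℝ) : Prop :=
  (∀ i, 0 ≤ p i) ∧ ∑ i, p i = 1

/-- A Guesser strategy outputs a distribution on card types for each nonzero deck. -/
def IsGuesser {n : ℕ} (G : Strat n) : Prop :=
  ∀ d : Deck n, d ≠ 0 → IsDist (G d)

/-- A Shuffler strategy outputs a distribution supported on the support of the deck. -/
def IsShuffler {n : ℕ} (S : Strat n) : Prop :=
  ∀ d : Deck n, d ≠ 0 → IsDist (S d) ∧ ∀ i, S d i ≠ 0 → d i ≠ 0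

/-- Expected score of the game, computed with fuel `N` (the number of cards). -/
def scoreAux {n : ℕ} (G S : Strat n) : ℕ → Deck n → ℝ
  | 0, _ => 0
  | N + 1, d => ∑ j ∈ Finset.univ.filter (fun j => d j ≠ 0),
      S d j * (G d j + scoreAux G S N (d.sub j))

/-- The expected score `E[C(d,G,S)]`. -/
noncomputable def score {n : ℕ} (G S : Strat n) (d : Deck n) : ℝ :=
  scoreAux G S (∑ i, d i) d

/-- `f(d,S)`: maximum expected score over all Guesser strategies. -/
noncomputable def fval {n : ℕ} (S : Strat n) (d : Deck n) : ℝ :=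
  sSup {x | ∃ G, IsGuesser G ∧ score G S d = x}

/-- `F(d,S)`: minimum expected score over all Guesser strategies. -/
noncomputable def Fval {n : ℕ} (S : Strat n) (d : Deck n) : ℝ :=
  sInf {x | ∃ G, IsGuesser G ∧ score G S d = x}

/-- `f(d) = min_S f(d,S)`. -/
noncomputable def fopt {n : ℕ} (d : Deck n) : ℝ :=
  sInf {x | ∃ S, IsShuffler S ∧ fval S d = x}

/-- `F(d) = max_S F(d,S)`. -/
noncomputable def Fopt {n : ℕ} (d : Deck n) : ℝ :=
  sSup {x | ∃ S, IsShuffler S ∧ Fval S d = x}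

/-- The greedy Shuffler strategy: uniform on the support of the deck. -/
noncomputable def greedy {n : ℕ} : Strat n :=
  fun d i => if d i ≠ 0 then ((Finset.univ.filter fun j => d j ≠ 0).card : ℝ)⁻¹ else 0

/-!
Against a fixed Shuffler `S`, the Guesser's best (worst) reply is to guess a most (least) likely
card. Hence `f(·,S)` and `-F(·,S)` are the expected costs of `S` in a one-player game where
drawing from the distribution `p` costs `r p = ⨆ k, p k`, resp. `r p = -⨅ k, p k`; such a cost `g`
solves the Bellman equation `SolvesBellman r S g`. Optimising over `S` turns `f` and `-F` into the
optimal cost `value r`, given by the Bellman recursion. As `r` is symmetric in the card types, so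
is `value r`. Monotonicity follows by induction on the number of cards: a draw distribution for
`d - δ_j` is transported by the transposition `(i j)` to one for `d - δ_i`, and the decks reached
after one draw are compared by induction, going once through `d - δ_i - δ_j`; the case
`d_i = d_j` is a relabelling.
-/

namespace Deck

variable {n : ℕ}

@[simp]
theorem sub_apply_self (d : Deck n) (k : Fin n) : d.sub k k = d k - 1 := if_pos rfl

theorem sub_apply_of_ne (d : Deck n) {k l : Fin n} (h : l ≠ k) : d.sub k l = d l := if_neg h

theorem sub_add_single {d : Deck n} {k : Fin n} (hk : d k ≠ 0) : d.sub k + Pi.single k 1 = d := by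
  funext l
  rcases eq_or_ne l k with rfl | hl
  · rw [Pi.add_apply, sub_apply_self, Pi.single_eq_same]
    omega
  · rw [Pi.add_apply, sub_apply_of_ne d hl, Pi.single_eq_of_ne hl, add_zero]

theorem sum_sub_add_one {d : Deck n} {k : Fin n} (hk : d k ≠ 0) :
    ∑ l, d.sub k l + 1 = ∑ l, d l := by
  conv_rhs => rw [← sub_add_single hk]
  simp [Finset.sum_add_distrib]

@[elab_as_elim]
theorem induction {motive : Deck n → Prop}
    (ind : ∀ d, (∀ k, d k ≠ 0 → motive (d.sub k)) → motive d) (d : Deck n) : motive d := by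
  induction h : ∑ l, d l using Nat.strong_induction_on generalizing d with
  | _ N ih =>
    refine ind d fun k hk => ih _ ?_ _ rfl
    have := sum_sub_add_one hk
    omega

theorem sub_comm (d : Deck n) (i j : Fin n) : (d.sub i).sub j = (d.sub j).sub i := by
  funext l
  simp only [sub]
  split_ifs <;> omega

theorem comp_perm_sub (d : Deck n) (σ : Equiv.Perm (Fin n)) (k : Fin n) :
    Deck.sub (d ∘ σ) k = d.sub (σ k) ∘ σ := by
  funext l
  simp [sub, σ.injective.eq_iff]

theorem sub_eq_sub_comp_swap {d : Deck n} {i j : Fin n} (h : d i = d j) :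
    d.sub i = d.sub j ∘ Equiv.swap i j := by
  funext l
  simp only [sub, Function.comp_apply, Equiv.swap_apply_def]
  split_ifs <;> subst_vars <;> omega

theorem sub_apply_swap_ne_zero {d : Deck n} {i j k : Fin n} (hlt : d j < d i) (hj : 0 < d j)
    (hk : d.sub j k ≠ 0) : d.sub i (Equiv.swap i j k) ≠ 0 := by
  have hne : i ≠ j := by rintro rfl; omega
  rcases eq_or_ne i k with rfl | hik
  · rw [Equiv.swap_apply_left, sub_apply_of_ne _ hne.symm]
    omega
  rcases eq_or_ne j k with rfl | hjk
  · rw [sub_apply_self] at hk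
    rw [Equiv.swap_apply_right, sub_apply_self]
    omega
  · rwa [Equiv.swap_apply_of_ne_of_ne hik.symm hjk.symm, sub_apply_of_ne _ hik.symm,
      ← sub_apply_of_ne d hjk.symm]

end Deck

section DrawDist

variable {n : ℕ}

def IsDrawDist (d : Deck n) (p : Fin n → ℝ) : Prop :=
  IsDist p ∧ ∀ k, p k ≠ 0 → d k ≠ 0

theorem IsShuffler.isDrawDist {S : Strat n} (hS : IsShuffler S) {d : Deck n} (hd : d ≠ 0) :
    IsDrawDist d (S d) :=
  hS d hd

theorem isDist_pi_single (k : Fin n) : IsDist (Pi.single k (1 : ℝ)) :=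
  ⟨fun l => by by_cases h : l = k <;> simp [h], by simp⟩

theorem sum_mul_pi_single_one (x : Fin n → ℝ) (c : Fin n) :
    ∑ k, x k * (Pi.single c 1 : Fin n → ℝ) k = x c := by
  simp [Pi.single_apply]

theorem IsDist.le_one {p : Fin n → ℝ} (hp : IsDist p) (k : Fin n) : p k ≤ 1 :=
  hp.2 ▸ Finset.single_le_sum (fun l _ => hp.1 l) (Finset.mem_univ k)

theorem IsDist.iInf_le_sum_mul {p : Fin n → ℝ} (hp : IsDist p) (x : Fin n → ℝ) :
    ⨅ k, x k ≤ ∑ k, p k * x k :=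
  calc ⨅ k, x k = ∑ k, p k * ⨅ l, x l := by rw [← Finset.sum_mul, hp.2, one_mul]
    _ ≤ ∑ k, p k * x k := Finset.sum_le_sum fun k _ =>
      mul_le_mul_of_nonneg_left (ciInf_le (Finite.bddBelow_range x) k) (hp.1 k)

theorem IsDist.sum_mul_le_iSup {p : Fin n → ℝ} (hp : IsDist p) (x : Fin n → ℝ) :
    ∑ k, p k * x k ≤ ⨆ k, x k :=
  calc ∑ k, p k * x k ≤ ∑ k, p k * ⨆ l, x l := Finset.sum_le_sum fun k _ =>
      mul_le_mul_of_nonneg_left (le_ciSup (Finite.bddAbove_range x) k) (hp.1 k)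
    _ = ⨆ k, x k := by rw [← Finset.sum_mul, hp.2, one_mul]

theorem IsDrawDist.sum_filter {d : Deck n} {p : Fin n → ℝ} (hp : IsDrawDist d p)
    (x : Fin n → ℝ) :
    ∑ k ∈ Finset.univ.filter (fun k => d k ≠ 0), p k * x k = ∑ k, p k * x k :=
  Finset.sum_filter_of_ne fun k _ hk => hp.2 k (left_ne_zero_of_mul hk)

theorem IsDrawDist.sum_mul_le_sum_mul {d : Deck n} {p x y : Fin n → ℝ} (hp : IsDrawDist d p)
    (h : ∀ k, d k ≠ 0 → x k ≤ y k) : ∑ k, p k * x k ≤ ∑ k, p k * y k := by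
  refine Finset.sum_le_sum fun k _ => ?_
  by_cases hk : p k = 0
  · simp [hk]
  · exact mul_le_mul_of_nonneg_left (h k (hp.2 k hk)) (hp.1.1 k)

theorem exists_isDrawDist {d : Deck n} (hd : d ≠ 0) : ∃ p, IsDrawDist d p := by
  obtain ⟨k, hk⟩ := Function.ne_iff.mp hd
  refine ⟨Pi.single k 1, isDist_pi_single k, fun l hl => ?_⟩
  obtain rfl : l = k := by
    by_contra h
    simp [h] at hl
  exact hk

theorem not_isDrawDist_zero (p : Fin n → ℝ) : ¬IsDrawDist 0 p := by
  rintro ⟨⟨-, hsum⟩, hsupp⟩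
  have hp : p = 0 := funext fun k => by_contra fun hk => hsupp k hk rfl
  simp [hp] at hsum

end DrawDist

section Score

variable {n : ℕ}

theorem score_zero (G S : Strat n) : score G S 0 = 0 := by
  simp [score, scoreAux]

theorem score_eq {G S : Strat n} (hS : IsShuffler S) {d : Deck n} (hd : d ≠ 0) :
    score G S d = ∑ k, S d k * G d k + ∑ k, S d k * score G S (d.sub k) := by
  obtain ⟨k, hk⟩ := Function.ne_iff.mp hd
  obtain ⟨N, hN⟩ : ∃ N, ∑ l, d l = N + 1 := ⟨_, (Deck.sum_sub_add_one hk).symm⟩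
  rw [← Finset.sum_add_distrib, score, hN, scoreAux]
  simp_rw [← mul_add]
  rw [← (hS.isDrawDist hd).sum_filter]
  refine Finset.sum_congr rfl fun l hl => ?_
  have := Deck.sum_sub_add_one (Finset.mem_filter.mp hl).2
  rw [score, show ∑ m, d.sub l m = N by omega]

theorem score_le_score {G G' S : Strat n} (hS : IsShuffler S)
    (h : ∀ d, d ≠ 0 → ∑ k, S d k * G d k ≤ ∑ k, S d k * G' d k) (d : Deck n) :
    score G S d ≤ score G' S d := by
  induction d using Deck.induction with
  | ind d ih =>
  rcases eq_or_ne d 0 with rfl | hd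
  · simp [score_zero]
  rw [score_eq hS hd, score_eq hS hd]
  exact add_le_add (h d hd) ((hS.isDrawDist hd).sum_mul_le_sum_mul ih)

end Score

section Bellman

variable {n : ℕ} {r : (Fin n → ℝ) → ℝ}

def bellman (r : (Fin n → ℝ) → ℝ) (v : Deck n → ℝ) (d : Deck n) (p : Fin n → ℝ) : ℝ :=
  r p + ∑ k, p k * v (d.sub k)

def SolvesBellman (r : (Fin n → ℝ) → ℝ) (S : Strat n) (g : Deck n → ℝ) : Prop :=
  g 0 = 0 ∧ ∀ d, d ≠ 0 → g d = bellman r g d (S d)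

theorem SolvesBellman.neg {S : Strat n} {g : Deck n → ℝ} (h : SolvesBellman r S g) :
    SolvesBellman (fun p => -r p) S (-g) := by
  refine ⟨by simp [h.1], fun d hd => ?_⟩
  rw [Pi.neg_apply, h.2 d hd]
  simp only [bellman, Pi.neg_apply, mul_neg, Finset.sum_neg_distrib, neg_add]

theorem solvesBellman_score {G S : Strat n} (hS : IsShuffler S)
    (hG : ∀ d, d ≠ 0 → ∑ k, S d k * G d k = r (S d)) : SolvesBellman r S (score G S) :=
  ⟨score_zero G S, fun d hd => by rw [score_eq hS hd, hG d hd, bellman]⟩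

theorem bellman_mono {v w : Deck n → ℝ} {d : Deck n} {p : Fin n → ℝ} (hp : IsDrawDist d p)
    (h : ∀ k, d k ≠ 0 → v (d.sub k) ≤ w (d.sub k)) : bellman r v d p ≤ bellman r w d p :=
  add_le_add le_rfl (hp.sum_mul_le_sum_mul h)

theorem bellman_add_const {p : Fin n → ℝ} (hp : IsDist p) (v : Deck n → ℝ) (d : Deck n) (c : ℝ) :
    bellman r (fun e => v e + c) d p = bellman r v d p + c := by
  simp only [bellman, mul_add, Finset.sum_add_distrib, ← Finset.sum_mul, hp.2, one_mul, add_assoc]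

theorem bddBelow_bellman_image (hbdd : BddBelow (r '' {p | IsDist p})) (v : Deck n → ℝ)
    (d : Deck n) : BddBelow (bellman r v d '' {p | IsDrawDist d p}) := by
  obtain ⟨c, hc⟩ := hbdd
  refine ⟨c + ⨅ k, v (d.sub k), ?_⟩
  rintro _ ⟨p, hp, rfl⟩
  exact add_le_add (hc ⟨p, hp.1, rfl⟩) (hp.1.iInf_le_sum_mul _)

-- The sum runs over the support of `d` only, so that the recursion terminates; see `value_eq`.
noncomputable def value (r : (Fin n → ℝ) → ℝ) (d : Deck n) : ℝ :=
  sInf ((fun p => r p + ∑ k ∈ (Finset.univ.filter fun k => d k ≠ 0).attach,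
    p k * value r (d.sub k)) '' {p | IsDrawDist d p})
termination_by ∑ k, d k
decreasing_by
  have := Deck.sum_sub_add_one (Finset.mem_filter.mp k.2).2
  omega

theorem value_eq (r : (Fin n → ℝ) → ℝ) (d : Deck n) :
    value r d = sInf (bellman r (value r) d '' {p | IsDrawDist d p}) := by
  rw [value]
  congr 1
  refine Set.image_congr fun p hp => ?_
  rw [bellman, Finset.sum_attach _ (fun k => p k * value r (d.sub k)), hp.sum_filter]

-- The empty deck admits no draw distribution, and `sInf ∅ = 0`.
theorem value_zero (r : (Fin n → ℝ) → ℝ) : value r 0 = 0 := by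
  have hempty : {p | IsDrawDist (0 : Deck n) p} = ∅ :=
    Set.eq_empty_of_forall_notMem not_isDrawDist_zero
  rw [value_eq, hempty, Set.image_empty, Real.sInf_empty]

theorem value_le_bellman (hbdd : BddBelow (r '' {p | IsDist p})) {d : Deck n} {p : Fin n → ℝ}
    (hp : IsDrawDist d p) : value r d ≤ bellman r (value r) d p := by
  rw [value_eq]
  exact csInf_le (bddBelow_bellman_image hbdd _ d) ⟨p, hp, rfl⟩

theorem le_value {d : Deck n} (hd : d ≠ 0) {x : ℝ}
    (h : ∀ p, IsDrawDist d p → x ≤ bellman r (value r) d p) : x ≤ value r d := by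
  rw [value_eq]
  obtain ⟨p, hp⟩ := exists_isDrawDist hd
  refine le_csInf ⟨_, p, hp, rfl⟩ ?_
  rintro _ ⟨p, hp, rfl⟩
  exact h p hp

theorem exists_bellman_lt {d : Deck n} (hd : d ≠ 0) {ε : ℝ} (hε : 0 < ε) :
    ∃ p, IsDrawDist d p ∧ bellman r (value r) d p < value r d + ε := by
  obtain ⟨p, hp⟩ := exists_isDrawDist hd
  have hlt : sInf (bellman r (value r) d '' {p | IsDrawDist d p}) < value r d + ε := by
    rw [← value_eq]
    linarith
  obtain ⟨_, ⟨q, hq, rfl⟩, hlt⟩ := exists_lt_of_csInf_lt (Set.Nonempty.image _ ⟨p, hp⟩) hlt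
  exact ⟨q, hq, hlt⟩

theorem value_le_of_solvesBellman (hbdd : BddBelow (r '' {p | IsDist p})) {S : Strat n}
    (hS : IsShuffler S) {g : Deck n → ℝ} (hg : SolvesBellman r S g) (d : Deck n) :
    value r d ≤ g d := by
  induction d using Deck.induction with
  | ind d ih =>
  rcases eq_or_ne d 0 with rfl | hd
  · rw [value_zero, hg.1]
  calc value r d ≤ bellman r (value r) d (S d) := value_le_bellman hbdd (hS.isDrawDist hd)
    _ ≤ bellman r g d (S d) := bellman_mono (hS.isDrawDist hd) ih
    _ = g d := (hg.2 d hd).symm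

-- A Shuffler that is `ε`-optimal at every step loses at most `ε` per card.
theorem exists_solvesBellman_le {ε : ℝ} (hε : 0 < ε) :
    ∃ S, IsShuffler S ∧ ∀ g, SolvesBellman r S g → ∀ d : Deck n,
      g d ≤ value r d + ε * ↑(∑ k, d k) := by
  have hstep (d : Deck n) :
      ∃ p, d ≠ 0 → IsDrawDist d p ∧ bellman r (value r) d p < value r d + ε := by
    rcases eq_or_ne d 0 with rfl | hd
    · exact ⟨0, fun h => (h rfl).elim⟩
    · obtain ⟨p, hp⟩ := exists_bellman_lt hd hε
      exact ⟨p, fun _ => hp⟩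
  choose S hS using hstep
  refine ⟨S, fun d hd => (hS d hd).1, fun g hg d => ?_⟩
  induction d using Deck.induction with
  | ind d ih =>
  rcases eq_or_ne d 0 with rfl | hd
  · simp [hg.1, value_zero]
  obtain ⟨hp, hlt⟩ := hS d hd
  have hcard (k : Fin n) (hk : d k ≠ 0) : ((∑ l, d.sub k l : ℕ) : ℝ) = ↑(∑ l, d l) - 1 := by
    rw [← Deck.sum_sub_add_one hk]
    push_cast
    ring
  calc g d = bellman r g d (S d) := hg.2 d hd
    _ ≤ bellman r (fun e => value r e + ε * (↑(∑ l, d l) - 1)) d (S d) :=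
      bellman_mono hp fun k hk => hcard k hk ▸ ih k hk
    _ = bellman r (value r) d (S d) + ε * (↑(∑ l, d l) - 1) := bellman_add_const hp.1 _ _ _
    _ ≤ value r d + ε * ↑(∑ l, d l) := by linarith

theorem sInf_eq_value (hbdd : BddBelow (r '' {p | IsDist p})) {cost : Strat n → Deck n → ℝ}
    (hcost : ∀ S, IsShuffler S → SolvesBellman r S (cost S)) (d : Deck n) :
    sInf {x | ∃ S, IsShuffler S ∧ cost S d = x} = value r d := by
  have hcosts : BddBelow {x | ∃ S, IsShuffler S ∧ cost S d = x} := by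
    refine ⟨value r d, ?_⟩
    rintro _ ⟨S, hS, rfl⟩
    exact value_le_of_solvesBellman hbdd hS (hcost S hS) d
  refine le_antisymm (le_of_forall_pos_le_add fun ε hε => ?_) (le_csInf ?_ ?_)
  · set N : ℝ := ↑(∑ k, d k)
    obtain ⟨S, hS, hle⟩ := exists_solvesBellman_le (r := r) (ε := ε / (N + 1)) (by positivity)
    calc sInf {x | ∃ S, IsShuffler S ∧ cost S d = x} ≤ cost S d := csInf_le hcosts ⟨S, hS, rfl⟩
      _ ≤ value r d + ε / (N + 1) * N := hle _ (hcost S hS) d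
      _ ≤ value r d + ε := by
        gcongr
        rw [div_mul_eq_mul_div, div_le_iff₀ (by positivity)]
        linarith
  · obtain ⟨S, hS, -⟩ := exists_solvesBellman_le (r := r) one_pos
    exact ⟨_, S, hS, rfl⟩
  · rintro _ ⟨S, hS, rfl⟩
    exact value_le_of_solvesBellman hbdd hS (hcost S hS) d

end Bellman

section Guesser

variable {n : ℕ}

theorem fval_eq_score {S : Strat n} (hS : IsShuffler S) {c : Deck n → Fin n}
    (hc : ∀ d, S d (c d) = ⨆ k, S d k) : fval S = score (fun d => Pi.single (c d) 1) S := by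
  funext d
  refine IsGreatest.csSup_eq ⟨⟨_, fun d _ => isDist_pi_single (c d), rfl⟩, ?_⟩
  rintro _ ⟨G, hG, rfl⟩
  refine score_le_score hS (fun e he => ?_) d
  simp_rw [sum_mul_pi_single_one, hc, mul_comm (S e _)]
  exact (hG e he).sum_mul_le_iSup _

theorem Fval_eq_score {S : Strat n} (hS : IsShuffler S) {c : Deck n → Fin n}
    (hc : ∀ d, S d (c d) = ⨅ k, S d k) : Fval S = score (fun d => Pi.single (c d) 1) S := by
  funext d
  refine IsLeast.csInf_eq ⟨⟨_, fun d _ => isDist_pi_single (c d), rfl⟩, ?_⟩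
  rintro _ ⟨G, hG, rfl⟩
  refine score_le_score hS (fun e he => ?_) d
  simp_rw [sum_mul_pi_single_one, hc, mul_comm (S e _)]
  exact (hG e he).iInf_le_sum_mul _

theorem solvesBellman_fval [Nonempty (Fin n)] {S : Strat n} (hS : IsShuffler S) :
    SolvesBellman (fun p => ⨆ k, p k) S (fval S) := by
  choose c hc using fun d => exists_eq_ciSup_of_finite (f := S d)
  rw [fval_eq_score hS hc]
  exact solvesBellman_score hS fun d _ => by rw [sum_mul_pi_single_one, hc]

theorem solvesBellman_Fval [Nonempty (Fin n)] {S : Strat n} (hS : IsShuffler S) :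
    SolvesBellman (fun p => ⨅ k, p k) S (Fval S) := by
  choose c hc using fun d => exists_eq_ciInf_of_finite (f := S d)
  rw [Fval_eq_score hS hc]
  exact solvesBellman_score hS fun d _ => by rw [sum_mul_pi_single_one, hc]

theorem bddBelow_iSup_image : BddBelow ((fun p => ⨆ k, p k) '' {p : Fin n → ℝ | IsDist p}) := by
  refine ⟨0, ?_⟩
  rintro _ ⟨p, hp, rfl⟩
  exact Real.iSup_nonneg hp.1

theorem bddBelow_neg_iInf_image [Nonempty (Fin n)] :
    BddBelow ((fun p => -⨅ k, p k) '' {p : Fin n → ℝ | IsDist p}) := by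
  refine ⟨-1, ?_⟩
  rintro _ ⟨p, hp, rfl⟩
  exact neg_le_neg <|
    ciInf_le_of_le (Finite.bddBelow_range p) (Classical.arbitrary _) (hp.le_one _)

theorem fopt_eq_value [Nonempty (Fin n)] (d : Deck n) :
    fopt d = value (fun p => ⨆ k, p k) d :=
  sInf_eq_value bddBelow_iSup_image (fun _ hS => solvesBellman_fval hS) d

theorem Fopt_eq_neg_value [Nonempty (Fin n)] (d : Deck n) :
    Fopt d = -value (fun p => -⨅ k, p k) d := by
  have hneg : {x | ∃ S, IsShuffler S ∧ (-Fval S) d = x} =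
      -{x | ∃ S, IsShuffler S ∧ Fval S d = x} := by
    ext x
    simp [neg_eq_iff_eq_neg]
  rw [← sInf_eq_value bddBelow_neg_iInf_image (fun _ hS => (solvesBellman_Fval hS).neg), hneg,
    Real.sInf_neg, neg_neg, Fopt]

end Guesser

section Monotonicity

variable {n : ℕ} {r : (Fin n → ℝ) → ℝ}

theorem value_le_value_of_coupling (hbdd : BddBelow (r '' {p | IsDist p}))
    (hperm : ∀ (p : Fin n → ℝ) (σ : Equiv.Perm (Fin n)), r (p ∘ σ) = r p)
    {x y : Deck n} (hx : x ≠ 0) (σ : Equiv.Perm (Fin n))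
    (hsupp : ∀ k, x k ≠ 0 → y (σ k) ≠ 0)
    (hle : ∀ k, x k ≠ 0 → value r (y.sub (σ k)) ≤ value r (x.sub k)) :
    value r y ≤ value r x := by
  refine le_value hx fun q hq => ?_
  have hp : IsDrawDist y (q ∘ σ.symm) :=
    ⟨⟨fun k => hq.1.1 _, (Equiv.sum_comp σ.symm q).trans hq.1.2⟩,
      fun k hk => by simpa using hsupp _ (hq.2 _ hk)⟩
  calc value r y ≤ bellman r (value r) y (q ∘ σ.symm) := value_le_bellman hbdd hp
    _ = r q + ∑ k, q k * value r (y.sub (σ k)) := by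
      rw [bellman, hperm, ← Equiv.sum_comp σ]
      simp
    _ ≤ bellman r (value r) x q := add_le_add le_rfl (hq.sum_mul_le_sum_mul hle)

theorem value_comp_perm_le (hbdd : BddBelow (r '' {p | IsDist p}))
    (hperm : ∀ (p : Fin n → ℝ) (σ : Equiv.Perm (Fin n)), r (p ∘ σ) = r p)
    (σ : Equiv.Perm (Fin n)) (d : Deck n) : value r (d ∘ σ) ≤ value r d := by
  induction d using Deck.induction with
  | ind d ih =>
  rcases eq_or_ne d 0 with rfl | hd
  · exact le_rfl
  refine value_le_value_of_coupling hbdd hperm hd σ.symm (fun k hk => by simpa using hk)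
    fun k hk => ?_
  rw [Deck.comp_perm_sub, Equiv.apply_symm_apply]
  exact ih k hk

theorem value_comp_perm (hbdd : BddBelow (r '' {p | IsDist p}))
    (hperm : ∀ (p : Fin n → ℝ) (σ : Equiv.Perm (Fin n)), r (p ∘ σ) = r p)
    (σ : Equiv.Perm (Fin n)) (d : Deck n) : value r (d ∘ σ) = value r d := by
  refine le_antisymm (value_comp_perm_le hbdd hperm σ d) ?_
  simpa [Function.comp_assoc] using value_comp_perm_le hbdd hperm σ.symm (d ∘ σ)

theorem value_sub_le_value_sub (hbdd : BddBelow (r '' {p | IsDist p}))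
    (hperm : ∀ (p : Fin n → ℝ) (σ : Equiv.Perm (Fin n)), r (p ∘ σ) = r p)
    {d : Deck n} {i j : Fin n} (hij : d j ≤ d i) (hj : 0 < d j) :
    value r (d.sub i) ≤ value r (d.sub j) := by
  induction d using Deck.induction with
  | ind d ih =>
  rcases eq_or_ne i j with rfl | hne
  · exact le_rfl
  rcases hij.eq_or_lt with heq | hlt
  · rw [Deck.sub_eq_sub_comp_swap heq.symm, value_comp_perm hbdd hperm]
  have hi : d.sub j i ≠ 0 := by rw [Deck.sub_apply_of_ne _ hne]; omega
  refine value_le_value_of_coupling hbdd hperm (Function.ne_iff.mpr ⟨i, hi⟩) (Equiv.swap i j)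
    (fun k hk => Deck.sub_apply_swap_ne_zero hlt hj hk) (fun k hk => ?_)
  rcases eq_or_ne i k with rfl | hik
  · rw [Equiv.swap_apply_left, Deck.sub_comm]
  rcases eq_or_ne j k with rfl | hjk
  · rw [Deck.sub_apply_self] at hk
    rw [Equiv.swap_apply_right]
    calc value r ((d.sub i).sub i) ≤ value r ((d.sub i).sub j) :=
          ih i (by omega) (by rw [Deck.sub_apply_of_ne _ hne.symm, Deck.sub_apply_self]; omega)
            (by rwa [Deck.sub_apply_of_ne _ hne.symm])
      _ = value r ((d.sub j).sub i) := by rw [Deck.sub_comm]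
      _ ≤ value r ((d.sub j).sub j) :=
          ih j (by omega) (by rw [Deck.sub_apply_self, Deck.sub_apply_of_ne _ hne]; omega)
            (by rw [Deck.sub_apply_self]; omega)
  · rw [Deck.sub_apply_of_ne _ hjk.symm] at hk
    rw [Equiv.swap_apply_of_ne_of_ne hik.symm hjk.symm, Deck.sub_comm d i k, Deck.sub_comm d j k]
    exact ih k hk (by rwa [Deck.sub_apply_of_ne _ hik, Deck.sub_apply_of_ne _ hjk])
      (by rwa [Deck.sub_apply_of_ne _ hjk])

theorem fopt_sub_le_fopt_sub {d : Deck n} {i j : Fin n} (hij : d j ≤ d i) (hj : 0 < d j) :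
    fopt (d.sub i) ≤ fopt (d.sub j) := by
  have : Nonempty (Fin n) := ⟨i⟩
  rw [fopt_eq_value, fopt_eq_value]
  exact value_sub_le_value_sub bddBelow_iSup_image (fun p σ => σ.iSup_comp (g := p)) hij hj

theorem Fopt_sub_le_Fopt_sub {d : Deck n} {i j : Fin n} (hij : d j ≤ d i) (hj : 0 < d j) :
    Fopt (d.sub j) ≤ Fopt (d.sub i) := by
  have : Nonempty (Fin n) := ⟨i⟩
  rw [Fopt_eq_neg_value, Fopt_eq_neg_value, neg_le_neg_iff]
  exact value_sub_le_value_sub bddBelow_neg_iInf_image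
    (fun p σ => congrArg Neg.neg (σ.iInf_comp (g := p))) hij hj

end Monotonicity

/-- if `d_i ≥ d_j > 0` then `f(d-δ_i) ≤ f(d-δ_j)` and `F(d-δ_i) ≥ F(d-δ_j)`. -/
theorem stmt4 {n : ℕ} (d : Deck n) (i j : Fin n) (hij : d j ≤ d i) (hj : 0 < d j) :
    fopt (d.sub i) ≤ fopt (d.sub j) ∧ Fopt (d.sub j) ≤ Fopt (d.sub i) :=
  ⟨fopt_sub_le_fopt_sub hij hj, Fopt_sub_le_Fopt_sub hij hj⟩
end

section
/- Let d be an n-vector such that the greedy strategy achieves the optimal value f(d') = f(d', G_greedy) for all n-vectors d' ≠ d with d'_k ≤ d_k for all k. Then for every nonempty J ⊆ supp(d) and every i ∈ supp(d), we have |J| · f(d - δ_i) < 1 + Σ_{j∈J} f(d - δ_j). -/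
open Finset

namespace Stmt5Aux
variable {n : ℕ}

lemma deck_ne_zero_iff (d : Deck n) : d ≠ 0 ↔ ∃ i, d i ≠ 0 := by
  simp [Function.ne_iff]

lemma sub_comm (d : Deck n) (i j : Fin n) : (d.sub i).sub j = (d.sub j).sub i := by
  funext k
  by_cases h1 : k = i <;> by_cases h2 : k = j <;> simp [Deck.sub, h1, h2] <;> split_ifs <;> omega

lemma sum_sub (d : Deck n) (j : Fin n) (hj : d j ≠ 0) :
    ∑ i, d.sub j i = (∑ i, d i) - 1 := by
  have h1 : ∑ i ∈ univ.erase j, d i + d j = ∑ i, d i :=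
    Finset.sum_erase_add univ d (mem_univ j)
  have h2 : ∑ i ∈ univ.erase j, d.sub j i + d.sub j j = ∑ i, d.sub j i :=
    Finset.sum_erase_add univ (d.sub j) (mem_univ j)
  have h3 : ∑ i ∈ univ.erase j, d.sub j i = ∑ i ∈ univ.erase j, d i := by
    refine Finset.sum_congr rfl fun i hi => ?_
    have : i ≠ j := (Finset.mem_erase.mp hi).1
    simp [Deck.sub, this]
  have h4 : d.sub j j = d j - 1 := by simp [Deck.sub]
  omega

lemma score_unfold (G S : Strat n) (d : Deck n) (hd : d ≠ 0) :
    score G S d = ∑ j ∈ univ.filter (fun j => d j ≠ 0),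
      S d j * (G d j + score G S (d.sub j)) := by
  obtain ⟨i, hi⟩ := (deck_ne_zero_iff d).mp hd
  have hpos : ∑ k, d k ≠ 0 := by
    intro h
    exact hi (Finset.sum_eq_zero_iff.mp h i (mem_univ i))
  obtain ⟨N, hN⟩ := Nat.exists_eq_succ_of_ne_zero hpos
  rw [score, hN]
  show ∑ j ∈ univ.filter (fun j => d j ≠ 0), S d j * (G d j + scoreAux G S N (d.sub j)) = _
  refine Finset.sum_congr rfl fun j hj => ?_
  have hj' : d j ≠ 0 := (Finset.mem_filter.mp hj).2
  have : ∑ k, d.sub j k = N := by rw [sum_sub d j hj', hN]; omega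
  rw [score, this]

/-- The optimal guesser against `S`: guess an argmax of `S d`. -/
noncomputable def Gstar (S : Strat n) : Strat n :=
  fun d i => if h : ∃ j, ∀ k, S d k ≤ S d j then (if i = h.choose then 1 else 0) else 0

lemma gstar_eq (S : Strat n) (d : Deck n) (hd : d ≠ 0) :
    ∃ c, (∀ k, S d k ≤ S d c) ∧ ∀ i, Gstar S d i = if i = c then 1 else 0 := by
  obtain ⟨i0, _⟩ := (deck_ne_zero_iff d).mp hd
  have : Nonempty (Fin n) := ⟨i0⟩
  have hex : ∃ j, ∀ k, S d k ≤ S d j := Finite.exists_max (S d)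
  refine ⟨hex.choose, hex.choose_spec, fun i => ?_⟩
  simp only [Gstar]
  rw [dif_pos hex]

lemma gstar_nonneg (S : Strat n) (d : Deck n) (i : Fin n) : 0 ≤ Gstar S d i := by
  simp only [Gstar]
  split_ifs <;> norm_num

lemma gstar_guesser (S : Strat n) : IsGuesser (Gstar S) := by
  intro d hd
  obtain ⟨c, _, hG⟩ := gstar_eq S d hd
  constructor
  · intro i; exact gstar_nonneg S d i
  · simp only [hG]
    simp

/-- For a shuffler, the argmax of `S d` lies in the support of `d`. -/
lemma gstar_spec {S : Strat n} (hS : IsShuffler S) (d : Deck n) (hd : d ≠ 0) :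
    ∃ c, d c ≠ 0 ∧ (∀ k, S d k ≤ S d c) ∧ ∀ i, Gstar S d i = if i = c then 1 else 0 := by
  obtain ⟨c, hc, hG⟩ := gstar_eq S d hd
  obtain ⟨⟨hnn, hsum⟩, hsupp⟩ := hS d hd
  refine ⟨c, hsupp c ?_, hc, hG⟩
  intro h0
  have : ∑ k, S d k ≤ 0 := Finset.sum_nonpos fun k _ => by
    have := hc k; rw [h0] at this; exact this
  rw [hsum] at this; linarith

lemma scoreAux_nonneg {G S : Strat n} (hG : ∀ d i, 0 ≤ G d i) (hS : ∀ d i, 0 ≤ S d i) :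
    ∀ N (d : Deck n), 0 ≤ scoreAux G S N d := by
  intro N
  induction N with
  | zero => intro d; simp [scoreAux]
  | succ N ih =>
    intro d
    refine Finset.sum_nonneg fun j _ => mul_nonneg (hS d j) (add_nonneg (hG d j) (ih _))

lemma greedy_nonneg (d : Deck n) (i : Fin n) : 0 ≤ greedy d i := by
  simp only [greedy]
  split_ifs <;> positivity

lemma greedy_shuffler : IsShuffler (greedy (n := n)) := by
  intro d hd
  obtain ⟨i0, hi0⟩ := (deck_ne_zero_iff d).mp hd
  have hmem : i0 ∈ univ.filter (fun j => d j ≠ 0) := by simp [hi0]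
  have hcard : ((univ.filter (fun j => d j ≠ 0)).card : ℝ) ≠ 0 := by
    have : 0 < (univ.filter (fun j => d j ≠ 0)).card := Finset.card_pos.mpr ⟨i0, hmem⟩
    positivity
  refine ⟨⟨fun i => greedy_nonneg d i, ?_⟩, fun i hi => ?_⟩
  · have : ∑ i, greedy d i = ∑ i ∈ univ.filter (fun j => d j ≠ 0),
        ((univ.filter (fun j => d j ≠ 0)).card : ℝ)⁻¹ := by
      rw [Finset.sum_filter]
      refine Finset.sum_congr rfl fun i _ => ?_
      simp only [greedy]
    rw [this, Finset.sum_const, nsmul_eq_mul, mul_inv_cancel₀ hcard]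
  · simp only [greedy] at hi
    by_contra h
    simp [h] at hi
lemma scoreAux_le_gstar {S : Strat n} (hS : IsShuffler S) :
    ∀ N (d : Deck n), ∑ i, d i = N → ∀ G : Strat n, IsGuesser G →
      scoreAux G S N d ≤ scoreAux (Gstar S) S N d := by
  intro N
  induction N with
  | zero => intro d _ G _; simp [scoreAux]
  | succ N ih =>
    intro d hd G hG
    have hdne : d ≠ 0 := by
      rw [deck_ne_zero_iff]
      by_contra h
      push_neg at h
      have : ∑ i, d i = 0 := Finset.sum_eq_zero fun i _ => h i
      omega
    obtain ⟨c, hc0, hcmax, hGstar⟩ := gstar_spec hS d hdne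
    obtain ⟨⟨hSnn, hSsum⟩, hSsupp⟩ := hS d hdne
    obtain ⟨hGnn, hGsum⟩ := hG d hdne
    have hcmem : c ∈ univ.filter (fun j => d j ≠ 0) := by simp [hc0]
    show ∑ j ∈ univ.filter (fun j => d j ≠ 0), S d j * (G d j + scoreAux G S N (d.sub j))
        ≤ ∑ j ∈ univ.filter (fun j => d j ≠ 0), S d j * (Gstar S d j + scoreAux (Gstar S) S N (d.sub j))
    have expand : ∀ (H : Strat n), ∑ j ∈ univ.filter (fun j => d j ≠ 0),
          S d j * (H d j + scoreAux H S N (d.sub j))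
        = ∑ j ∈ univ.filter (fun j => d j ≠ 0), S d j * H d j
          + ∑ j ∈ univ.filter (fun j => d j ≠ 0), S d j * scoreAux H S N (d.sub j) := by
      intro H
      rw [← Finset.sum_add_distrib]
      exact Finset.sum_congr rfl fun j _ => by ring
    rw [expand G, expand (Gstar S)]
    have h1 : ∑ j ∈ univ.filter (fun j => d j ≠ 0), S d j * G d j ≤ S d c := by
      calc ∑ j ∈ univ.filter (fun j => d j ≠ 0), S d j * G d j
          ≤ ∑ j ∈ univ.filter (fun j => d j ≠ 0), S d c * G d j := by
            refine Finset.sum_le_sum fun j _ => mul_le_mul_of_nonneg_right (hcmax j) (hGnn j)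
        _ = S d c * ∑ j ∈ univ.filter (fun j => d j ≠ 0), G d j := by rw [Finset.mul_sum]
        _ ≤ S d c * 1 := by
            refine mul_le_mul_of_nonneg_left ?_ (le_trans (hSnn c) (le_refl _))
            rw [← hGsum]
            exact Finset.sum_le_sum_of_subset_of_nonneg (Finset.filter_subset _ _)
              fun i _ _ => hGnn i
        _ = S d c := mul_one _
    have h2 : ∑ j ∈ univ.filter (fun j => d j ≠ 0), S d j * Gstar S d j = S d c := by
      have : ∀ j ∈ univ.filter (fun j => d j ≠ 0),
          S d j * Gstar S d j = if j = c then S d j else 0 := by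
        intro j _
        rw [hGstar j]
        split_ifs <;> simp
      rw [Finset.sum_congr rfl this, Finset.sum_ite_eq' _ c (fun j => S d j), if_pos hcmem]
    have h3 : ∑ j ∈ univ.filter (fun j => d j ≠ 0), S d j * scoreAux G S N (d.sub j)
        ≤ ∑ j ∈ univ.filter (fun j => d j ≠ 0), S d j * scoreAux (Gstar S) S N (d.sub j) := by
      refine Finset.sum_le_sum fun j hj => ?_
      have hj' : d j ≠ 0 := (Finset.mem_filter.mp hj).2
      have hsum : ∑ i, d.sub j i = N := by rw [sum_sub d j hj', hd]; omega
      exact mul_le_mul_of_nonneg_left (ih (d.sub j) hsum G hG) (hSnn j)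
    linarith

lemma fval_eq_gstar {S : Strat n} (hS : IsShuffler S) (d : Deck n) :
    fval S d = score (Gstar S) S d := by
  have hub : ∀ x ∈ {x | ∃ G, IsGuesser G ∧ score G S d = x}, x ≤ score (Gstar S) S d := by
    rintro x ⟨G, hG, rfl⟩
    exact scoreAux_le_gstar hS _ d rfl G hG
  have hmem : score (Gstar S) S d ∈ {x | ∃ G, IsGuesser G ∧ score G S d = x} :=
    ⟨Gstar S, gstar_guesser S, rfl⟩
  exact le_antisymm (csSup_le ⟨_, hmem⟩ hub) (le_csSup ⟨_, hub⟩ hmem)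

lemma fval_zero {S : Strat n} (hS : IsShuffler S) : fval S (0 : Deck n) = 0 := by
  rw [fval_eq_gstar hS]
  have : ∑ i, (0 : Deck n) i = 0 := by simp
  rw [score, this]
  rfl

lemma v_nonneg (d : Deck n) : 0 ≤ fval greedy d := by
  rw [fval_eq_gstar greedy_shuffler]
  exact scoreAux_nonneg (fun d i => gstar_nonneg _ d i) (fun d i => greedy_nonneg d i) _ d

/-- The greedy recursion: `m · v(d) = 1 + ∑_{j ∈ supp d} v(d - δⱼ)`. -/
lemma v_rec (d : Deck n) (hd : d ≠ 0) :
    ((univ.filter (fun j => d j ≠ 0)).card : ℝ) * fval greedy d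
      = 1 + ∑ j ∈ univ.filter (fun j => d j ≠ 0), fval greedy (d.sub j) := by
  obtain ⟨i0, hi0⟩ := (deck_ne_zero_iff d).mp hd
  have hmem : i0 ∈ univ.filter (fun j => d j ≠ 0) := by simp [hi0]
  have hcard : ((univ.filter (fun j => d j ≠ 0)).card : ℝ) ≠ 0 := by
    have : 0 < (univ.filter (fun j => d j ≠ 0)).card := Finset.card_pos.mpr ⟨i0, hmem⟩
    positivity
  obtain ⟨c, hc0, hcmax, hGstar⟩ := gstar_spec greedy_shuffler d hd
  have hcmem : c ∈ univ.filter (fun j => d j ≠ 0) := by simp [hc0]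
  rw [fval_eq_gstar greedy_shuffler, score_unfold _ _ _ hd]
  have step : ∀ j ∈ univ.filter (fun j => d j ≠ 0),
      greedy d j * (Gstar greedy d j + score (Gstar greedy) greedy (d.sub j))
      = ((univ.filter (fun j => d j ≠ 0)).card : ℝ)⁻¹ *
          ((if j = c then 1 else 0) + fval greedy (d.sub j)) := by
    intro j hj
    have hj' : d j ≠ 0 := (Finset.mem_filter.mp hj).2
    rw [hGstar j, ← fval_eq_gstar greedy_shuffler]
    simp only [greedy, if_pos hj']
  rw [Finset.sum_congr rfl step, ← Finset.mul_sum, Finset.sum_add_distrib,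
    Finset.sum_ite_eq' _ c (fun _ => (1:ℝ)), if_pos hcmem, ← mul_assoc,
    mul_inv_cancel₀ hcard, one_mul]
lemma supp_sub_of_one {d : Deck n} {k : Fin n} (hk : d k = 1) :
    univ.filter (fun j => d.sub k j ≠ 0) = (univ.filter (fun j => d j ≠ 0)).erase k := by
  ext j
  simp only [Finset.mem_filter, Finset.mem_erase, Finset.mem_univ, true_and]
  by_cases h : j = k <;> simp [Deck.sub, h, hk]

lemma supp_sub_of_ge {d : Deck n} {k : Fin n} (hk : 2 ≤ d k) :
    univ.filter (fun j => d.sub k j ≠ 0) = univ.filter (fun j => d j ≠ 0) := by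
  ext j
  simp only [Finset.mem_filter, Finset.mem_univ, true_and]
  by_cases h : j = k <;> simp [Deck.sub, h] <;> omega

/-- Strict monotonicity: removing a card strictly decreases the greedy value. -/
lemma v_strict_aux : ∀ N : ℕ, ∀ a : Deck n, ∑ i, a i = N → ∀ k, a k ≠ 0 →
    fval greedy (a.sub k) < fval greedy a := by
  intro N
  induction N with
  | zero =>
    intro a ha k hk
    exact absurd (Finset.sum_eq_zero_iff.mp ha k (mem_univ k)) hk
  | succ N ih =>
    intro a ha k hk
    have hane : a ≠ 0 := (deck_ne_zero_iff a).mpr ⟨k, hk⟩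
    have hkmem : k ∈ univ.filter (fun j => a j ≠ 0) := by simp [hk]
    set F := univ.filter (fun j => a j ≠ 0) with hF
    have hFcardpos : 0 < F.card := Finset.card_pos.mpr ⟨k, hkmem⟩
    have hrecA : (F.card : ℝ) * fval greedy a = 1 + ∑ j ∈ F, fval greedy (a.sub j) :=
      v_rec a hane
    have hsub_sum : ∀ j, a j ≠ 0 → ∑ i, a.sub j i = N := by
      intro j hj; rw [sum_sub a j hj, ha]; omega
    by_cases h1 : a k = 1
    · -- removing the last copy of k
      by_cases hm : F.card = 1
      · -- single card type: a.sub k = 0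
        have hFk : F = {k} := by
          obtain ⟨x, hx⟩ := Finset.card_eq_one.mp hm
          rw [hx] at hkmem ⊢
          rw [Finset.mem_singleton.mp hkmem]
        have hzero : a.sub k = 0 := by
          funext j
          by_cases hj : j = k
          · simp [Deck.sub, hj, h1]
          · have : j ∉ F := by rw [hFk]; simp [hj]
            simp only [hF, Finset.mem_filter, Finset.mem_univ, true_and, not_not] at this
            simp [Deck.sub, hj, this]
        rw [hzero, fval_zero greedy_shuffler]
        have : (F.card : ℝ) * fval greedy a = 1 + fval greedy (a.sub k) := by
          rw [hrecA, hFk, Finset.sum_singleton]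
        rw [hm] at this
        rw [hzero, fval_zero greedy_shuffler] at this
        simp at this
        rw [this]; norm_num
      · -- m ≥ 2
        have hm2 : 2 ≤ F.card := by omega
        have hsupp : univ.filter (fun j => a.sub k j ≠ 0) = F.erase k := supp_sub_of_one h1
        have hcardE : (F.erase k).card = F.card - 1 := Finset.card_erase_of_mem hkmem
        have hEne : (F.erase k).Nonempty := by
          rw [← Finset.card_pos, hcardE]; omega
        have hsubne : a.sub k ≠ 0 := by
          obtain ⟨j, hj⟩ := hEne
          refine (deck_ne_zero_iff _).mpr ⟨j, ?_⟩
          have : j ∈ univ.filter (fun j => a.sub k j ≠ 0) := hsupp ▸ hj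
          exact (Finset.mem_filter.mp this).2
        have hrecE : ((F.erase k).card : ℝ) * fval greedy (a.sub k)
            = 1 + ∑ j ∈ F.erase k, fval greedy ((a.sub k).sub j) := by
          have := v_rec (a.sub k) hsubne
          rwa [hsupp] at this
        have hstrict : ∑ j ∈ F.erase k, fval greedy ((a.sub k).sub j)
            < ∑ j ∈ F.erase k, fval greedy (a.sub j) := by
          refine Finset.sum_lt_sum_of_nonempty hEne fun j hj => ?_
          have hjk : j ≠ k := (Finset.mem_erase.mp hj).1
          have hja : a j ≠ 0 := (Finset.mem_filter.mp (Finset.mem_erase.mp hj).2).2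
          rw [sub_comm]
          refine ih (a.sub j) (hsub_sum j hja) k ?_
          simp only [Deck.sub]
          rw [if_neg (fun h => hjk h.symm)]
          omega
        have hsplit : ∑ j ∈ F.erase k, fval greedy (a.sub j) + fval greedy (a.sub k)
            = ∑ j ∈ F, fval greedy (a.sub j) := Finset.sum_erase_add F _ hkmem
        have hcE : ((F.erase k).card : ℝ) = (F.card : ℝ) - 1 := by
          rw [hcardE]; push_cast [Nat.cast_sub (by omega : 1 ≤ F.card)]; ring
        have hmR : (2 : ℝ) ≤ (F.card : ℝ) := by exact_mod_cast hm2
        -- combine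
        have key : (F.card : ℝ) * fval greedy a - (F.card : ℝ) * fval greedy (a.sub k) > 0 := by
          have e1 : (F.card : ℝ) * fval greedy a
              = 1 + (∑ j ∈ F.erase k, fval greedy (a.sub j) + fval greedy (a.sub k)) := by
            rw [hrecA, hsplit]
          have e2 : ((F.card : ℝ) - 1) * fval greedy (a.sub k)
              = 1 + ∑ j ∈ F.erase k, fval greedy ((a.sub k).sub j) := by
            rw [← hcE, hrecE]
          nlinarith [hstrict]
        nlinarith [key, hmR]
    · -- a k ≥ 2
      have h2 : 2 ≤ a k := by omega
      have hsupp : univ.filter (fun j => a.sub k j ≠ 0) = F := supp_sub_of_ge h2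
      have hsubne : a.sub k ≠ 0 := by
        refine (deck_ne_zero_iff _).mpr ⟨k, ?_⟩
        simp [Deck.sub]; omega
      have hrecE : (F.card : ℝ) * fval greedy (a.sub k)
          = 1 + ∑ j ∈ F, fval greedy ((a.sub k).sub j) := by
        have := v_rec (a.sub k) hsubne
        rwa [hsupp] at this
      have hstrict : ∑ j ∈ F, fval greedy ((a.sub k).sub j)
          < ∑ j ∈ F, fval greedy (a.sub j) := by
        refine Finset.sum_lt_sum_of_nonempty ⟨k, hkmem⟩ fun j hj => ?_
        have hja : a j ≠ 0 := (Finset.mem_filter.mp hj).2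
        rw [sub_comm]
        refine ih (a.sub j) (hsub_sum j hja) k ?_
        simp only [Deck.sub]
        split_ifs <;> omega
      have hmR : (0 : ℝ) < (F.card : ℝ) := by exact_mod_cast hFcardpos
      nlinarith [hrecA, hrecE, hstrict, hmR]

lemma v_strict (a : Deck n) (k : Fin n) (hk : a k ≠ 0) :
    fval greedy (a.sub k) < fval greedy a :=
  v_strict_aux (∑ i, a i) a rfl k hk
/-- Key bound: for `K` inside the support of `e`, `|K|·v(e) ≤ 1 + ∑_{j∈K} v(e-δⱼ)`. -/
lemma caseA (e : Deck n) (he : e ≠ 0) (K : Finset (Fin n))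
    (hK : K ⊆ univ.filter (fun j => e j ≠ 0)) :
    (K.card : ℝ) * fval greedy e ≤ 1 + ∑ j ∈ K, fval greedy (e.sub j) := by
  set F := univ.filter (fun j => e j ≠ 0) with hF
  have hrec : (F.card : ℝ) * fval greedy e = 1 + ∑ j ∈ F, fval greedy (e.sub j) := v_rec e he
  have hsplit : ∑ j ∈ F \ K, fval greedy (e.sub j) + ∑ j ∈ K, fval greedy (e.sub j)
      = ∑ j ∈ F, fval greedy (e.sub j) := Finset.sum_sdiff hK
  have hT : ∑ j ∈ F \ K, fval greedy (e.sub j) ≤ ((F \ K).card : ℝ) * fval greedy e := by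
    have := Finset.sum_le_card_nsmul (F \ K) (fun j => fval greedy (e.sub j))
      (fval greedy e) (fun j hj => by
        have : e j ≠ 0 := (Finset.mem_filter.mp (Finset.mem_sdiff.mp hj).1).2
        exact le_of_lt (v_strict e j this))
    rwa [nsmul_eq_mul] at this
  have hcard : ((F \ K).card : ℝ) + (K.card : ℝ) = (F.card : ℝ) := by
    rw [Finset.card_sdiff_of_subset hK]
    push_cast [Nat.cast_sub (Finset.card_le_card hK)]
    ring
  have h5 : ((F \ K).card : ℝ) * fval greedy e + (K.card : ℝ) * fval greedy e
      = (F.card : ℝ) * fval greedy e := by rw [← add_mul, hcard]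
  linarith

end Stmt5Aux

open Stmt5Aux

/-- if greedy is optimal for all strictly smaller decks, then
`|J|·f(d-δ_i) < 1 + ∑_{j∈J} f(d-δ_j)` for nonempty `J ⊆ supp(d)` and `i ∈ supp(d)`. -/
theorem stmt5 {n : ℕ} (d : Deck n)
    (hgreedy : ∀ d' : Deck n, d' ≠ d → (∀ k, d' k ≤ d k) → fval greedy d' = fopt d') :
    ∀ J ⊆ Finset.univ.filter (fun j => d j ≠ 0), J.Nonempty →
      ∀ i ∈ Finset.univ.filter (fun j => d j ≠ 0),
        (J.card : ℝ) * fopt (d.sub i) < 1 + ∑ j ∈ J, fopt (d.sub j) := by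
  intro J hJ hJne i hi
  have hid : d i ≠ 0 := (Finset.mem_filter.mp hi).2
  -- fopt = fval greedy on all one-card-smaller decks
  have hsub : ∀ j : Fin n, d j ≠ 0 → fopt (d.sub j) = fval greedy (d.sub j) := by
    intro j hj
    refine (hgreedy (d.sub j) ?_ ?_).symm
    · intro h
      have := congrFun h j
      simp [Deck.sub] at this
      omega
    · intro k
      simp only [Deck.sub]
      split_ifs <;> omega
  have hJd : ∀ j ∈ J, d j ≠ 0 := fun j hj => (Finset.mem_filter.mp (hJ hj)).2
  rw [hsub i hid, Finset.sum_congr rfl (fun j hj => hsub j (hJd j hj))]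
  by_cases he : d.sub i = 0
  · rw [he, fval_zero greedy_shuffler]
    have : 0 ≤ ∑ j ∈ J, fval greedy (d.sub j) :=
      Finset.sum_nonneg fun j _ => v_nonneg _
    nlinarith
  · have hvd : ∀ j ∈ J, (d.sub i) j ≠ 0 → fval greedy ((d.sub i).sub j) < fval greedy (d.sub j) := by
      intro j hj hij
      have hdji : (d.sub j) i ≠ 0 := by
        by_cases hji : j = i
        · subst hji
          simpa [Deck.sub] using hij
        · simp only [Deck.sub]
          rw [if_neg (fun h => hji h.symm)]
          exact hid
      rw [sub_comm]
      exact v_strict (d.sub j) i hdji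
    by_cases hJE : J ⊆ univ.filter (fun j => (d.sub i) j ≠ 0)
    · have h1 := caseA (d.sub i) he J hJE
      have h2 : ∑ j ∈ J, fval greedy ((d.sub i).sub j) < ∑ j ∈ J, fval greedy (d.sub j) :=
        Finset.sum_lt_sum_of_nonempty hJne fun j hj =>
          hvd j hj (Finset.mem_filter.mp (hJE hj)).2
      linarith
    · -- some element of J outside supp(d - δᵢ): it must be i, with d i = 1
      obtain ⟨j0, hj0J, hj0⟩ := Finset.not_subset.mp hJE
      have hj0e : (d.sub i) j0 = 0 := by
        by_contra h
        exact hj0 (Finset.mem_filter.mpr ⟨Finset.mem_univ _, h⟩)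
      have hj0i : j0 = i := by
        by_contra h
        have : (d.sub i) j0 = d j0 := by simp [Deck.sub, h]
        exact (hJd j0 hj0J) (this ▸ hj0e)
      subst hj0i
      set K := J.erase j0 with hKdef
      have hKE : K ⊆ univ.filter (fun j => (d.sub j0) j ≠ 0) := by
        intro j hjK
        have hjne : j ≠ j0 := (Finset.mem_erase.mp hjK).1
        have : (d.sub j0) j = d j := by simp [Deck.sub, hjne]
        exact Finset.mem_filter.mpr ⟨Finset.mem_univ _,
          this ▸ hJd j (Finset.mem_erase.mp hjK).2⟩
      have hcardJ : (J.card : ℝ) = (K.card : ℝ) + 1 := by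
        have h1 : K.card = J.card - 1 := Finset.card_erase_of_mem hj0J
        have h2 : 1 ≤ J.card := Finset.card_pos.mpr ⟨j0, hj0J⟩
        have : J.card = K.card + 1 := by omega
        rw [this]; push_cast; ring
      have hsumJ : ∑ j ∈ K, fval greedy (d.sub j) + fval greedy (d.sub j0)
          = ∑ j ∈ J, fval greedy (d.sub j) := Finset.sum_erase_add J _ hj0J
      have hKbound : (K.card : ℝ) * fval greedy (d.sub j0) < 1 + ∑ j ∈ K, fval greedy (d.sub j) := by
        rcases K.eq_empty_or_nonempty with hKe | hKne
        · rw [hKe]; simp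
        · have h1 := caseA (d.sub j0) he K hKE
          have h2 : ∑ j ∈ K, fval greedy ((d.sub j0).sub j) < ∑ j ∈ K, fval greedy (d.sub j) :=
            Finset.sum_lt_sum_of_nonempty hKne fun j hj =>
              hvd j (Finset.mem_erase.mp hj).2 (Finset.mem_filter.mp (hKE hj)).2
          linarith
      have hmul : (J.card : ℝ) * fval greedy (d.sub j0)
          = (K.card : ℝ) * fval greedy (d.sub j0) + fval greedy (d.sub j0) := by
        rw [hcardJ]; ring
      linarith
end

section
/- Against the greedy Shuffler strategy, every Guesser strategy that always guesses a card type currently in the deck achieves the same expected score, which equals the maximum expected score max_{G'} E[C(d,G',G_greedy)]. -/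
open Finset

lemma key10 {n : ℕ} (G : Strat n) (hG : IsGuesser G)
    (hin : ∀ d : Deck n, d ≠ 0 → ∀ i, G d i ≠ 0 → d i ≠ 0)
    (G' : Strat n) (hG' : IsGuesser G') :
    ∀ N (d : Deck n), scoreAux G' greedy N d ≤ scoreAux G greedy N d := by
  intro N
  induction N with
  | zero => intro d; simp [scoreAux]
  | succ N ih =>
    intro d
    by_cases hd : d = 0
    · subst hd
      simp [scoreAux, Pi.zero_apply]
    · simp only [scoreAux]
      set s := Finset.univ.filter (fun j => d j ≠ 0) with hs
      have hgj : ∀ j ∈ s, greedy d j = (s.card : ℝ)⁻¹ := by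
        intro j hj
        simp only [hs, Finset.mem_filter] at hj
        simp [greedy, hj.2, hs]
      have hc : (0:ℝ) ≤ (s.card : ℝ)⁻¹ := by positivity
      have hsum : ∀ (H : Strat n), ∑ j ∈ s, greedy d j * (H d j + scoreAux H greedy N (d.sub j))
          = (s.card : ℝ)⁻¹ * (∑ j ∈ s, H d j) + ∑ j ∈ s, (s.card : ℝ)⁻¹ * scoreAux H greedy N (d.sub j) := by
        intro H
        rw [Finset.mul_sum, ← Finset.sum_add_distrib]
        refine Finset.sum_congr rfl fun j hj => ?_
        rw [hgj j hj]; ring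
      rw [hsum G', hsum G]
      have h1 : ∑ j ∈ s, G' d j ≤ 1 := by
        rw [← (hG' d hd).2]
        exact Finset.sum_le_sum_of_subset_of_nonneg (Finset.subset_univ _)
          (fun i _ _ => (hG' d hd).1 i)
      have h2 : ∑ j ∈ s, G d j = 1 := by
        rw [← (hG d hd).2]
        refine Finset.sum_subset (Finset.subset_univ _) fun i _ hi => ?_
        by_contra h
        exact hi (by simp [hs, hin d hd i h])
      refine add_le_add ?_ ?_
      · rw [h2]; exact mul_le_mul_of_nonneg_left h1 hc
      · exact Finset.sum_le_sum fun j _ => mul_le_mul_of_nonneg_left (ih (d.sub j)) hc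

/-- against the greedy Shuffler, every Guesser strategy which always
guesses a card type present in the deck achieves the maximum expected score. -/
theorem stmt10 {n : ℕ} (G : Strat n) (hG : IsGuesser G)
    (hin : ∀ d : Deck n, d ≠ 0 → ∀ i, G d i ≠ 0 → d i ≠ 0) :
    ∀ d : Deck n, score G greedy d = fval greedy d := by
  intro d
  have hmem : score G greedy d ∈ {x | ∃ G', IsGuesser G' ∧ score G' greedy d = x} :=
    ⟨G, hG, rfl⟩
  have hub : ∀ x ∈ {x | ∃ G', IsGuesser G' ∧ score G' greedy d = x}, x ≤ score G greedy d := by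
    rintro x ⟨G', hG', rfl⟩
    exact key10 G hG hin G' hG' _ d
  exact le_antisymm (le_csSup ⟨_, hub⟩ hmem) (csSup_le ⟨_, hmem⟩ hub)
end

section
/- Against the greedy Shuffler strategy, every Guesser strategy that, whenever some card type is absent from the deck, guesses an absent card type, achieves the minimum expected score min_{G'} E[C(d,G',G_greedy)]. -/
open Finset

lemma Deck.sub_sum {n : ℕ} (d : Deck n) (j : Fin n) (hj : d j ≠ 0) :
    ∑ i, d.sub j i = (∑ i, d i) - 1 := by
  have h1 : d.sub j = Function.update d j (d j - 1) := by
    funext i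
    by_cases h : i = j <;> simp [Deck.sub, Function.update, h]
  rw [h1, Finset.sum_update_of_mem (Finset.mem_univ j), Finset.sdiff_singleton_eq_erase]
  have h2 := Finset.sum_erase_add Finset.univ d (Finset.mem_univ j)
  omega

lemma stmt11_key {n : ℕ} (G G' : Strat n) (hG : IsGuesser G)
    (hout : ∀ d : Deck n, d ≠ 0 → (∃ i, d i = 0) → ∀ i, G d i ≠ 0 → d i = 0)
    (hG' : IsGuesser G') :
    ∀ N (d : Deck n), ∑ i, d i = N →
      scoreAux G greedy N d ≤ scoreAux G' greedy N d := by
  intro N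
  induction N with
  | zero => intro d _; simp [scoreAux]
  | succ N ih =>
    intro d hd
    have hd0 : d ≠ 0 := by
      intro h; subst h; simp at hd
    set S := Finset.univ.filter (fun j => d j ≠ 0) with hS
    have hSne : S.Nonempty := by
      obtain ⟨i, hi⟩ := Function.ne_iff.mp hd0
      have hi' : d i ≠ 0 := by simpa using hi
      exact ⟨i, by simp [hS, hi']⟩
    have hcard : (0 : ℝ) < (S.card : ℝ) := by
      exact_mod_cast Finset.card_pos.mpr hSne
    have hgreedy : ∀ j ∈ S, greedy d j = (S.card : ℝ)⁻¹ := by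
      intro j hj
      simp only [hS, Finset.mem_filter] at hj
      simp [greedy, hj.2, hS]
    simp only [scoreAux, ← hS]
    have e : ∀ H : Strat n, ∑ j ∈ S, greedy d j * (H d j + scoreAux H greedy N (d.sub j)) =
        (S.card : ℝ)⁻¹ * (∑ j ∈ S, H d j)
        + (S.card : ℝ)⁻¹ * (∑ j ∈ S, scoreAux H greedy N (d.sub j)) := by
      intro H
      have e1 : ∑ j ∈ S, greedy d j * (H d j + scoreAux H greedy N (d.sub j)) =
          ∑ j ∈ S, (S.card : ℝ)⁻¹ * (H d j + scoreAux H greedy N (d.sub j)) :=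
        Finset.sum_congr rfl fun j hj => by rw [hgreedy j hj]
      rw [e1]
      simp only [mul_add, Finset.sum_add_distrib, Finset.mul_sum]
    rw [e G, e G']
    have hinv : (0 : ℝ) ≤ (S.card : ℝ)⁻¹ := by positivity
    have hsub : ∀ j ∈ S, scoreAux G greedy N (d.sub j) ≤ scoreAux G' greedy N (d.sub j) := by
      intro j hj
      simp only [hS, Finset.mem_filter] at hj
      exact ih (d.sub j) (by rw [Deck.sub_sum d j hj.2, hd]; omega)
    have hguess : ∑ j ∈ S, G d j ≤ ∑ j ∈ S, G' d j := by
      by_cases hfull : S = Finset.univ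
      · rw [hfull, (hG d hd0).2, (hG' d hd0).2]
      · have hex : ∃ i, d i = 0 := by
          obtain ⟨i, hi⟩ := Finset.exists_of_ssubset
            (Finset.ssubset_univ_iff.mpr hfull)
          exact ⟨i, by by_contra h; exact hi.2 (by simp [hS, h])⟩
        have : ∑ j ∈ S, G d j = 0 := by
          apply Finset.sum_eq_zero
          intro j hj
          simp only [hS, Finset.mem_filter] at hj
          by_contra h
          exact hj.2 (hout d hd0 hex j h)
        rw [this]
        exact Finset.sum_nonneg (fun j _ => (hG' d hd0).1 j)
    have h1 : (S.card : ℝ)⁻¹ * ∑ j ∈ S, G d j ≤ (S.card : ℝ)⁻¹ * ∑ j ∈ S, G' d j :=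
      mul_le_mul_of_nonneg_left hguess hinv
    have h2 : (S.card : ℝ)⁻¹ * ∑ j ∈ S, scoreAux G greedy N (d.sub j)
        ≤ (S.card : ℝ)⁻¹ * ∑ j ∈ S, scoreAux G' greedy N (d.sub j) :=
      mul_le_mul_of_nonneg_left (Finset.sum_le_sum hsub) hinv
    linarith

/-- against the greedy Shuffler, every Guesser strategy which, whenever
some card type is absent from the deck, guesses only absent card types, achieves the
minimum expected score. -/
theorem stmt11 {n : ℕ} (G : Strat n) (hG : IsGuesser G)
    (hout : ∀ d : Deck n, d ≠ 0 → (∃ i, d i = 0) → ∀ i, G d i ≠ 0 → d i = 0) :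
    ∀ d : Deck n, score G greedy d = Fval greedy d := by
  intro d
  have hmem : score G greedy d ∈ {x | ∃ G', IsGuesser G' ∧ score G' greedy d = x} :=
    ⟨G, hG, rfl⟩
  have hlb : ∀ x ∈ {x | ∃ G', IsGuesser G' ∧ score G' greedy d = x},
      score G greedy d ≤ x := by
    rintro x ⟨G', hG', rfl⟩
    exact stmt11_key G G' hG hout hG' _ d rfl
  exact le_antisymm (le_csInf ⟨_, hmem⟩ hlb) (csInf_le ⟨_, hlb⟩ hmem)
end

section
/- In the Restricted Matching Pennies game where both decks consist of m copies of each of n card types, the value of the game is m: max_A min_B E[M(a,b,A,B)] = m, and moreover if either player plays the uniform strategy U then the expected number of matches is exactly m regardless of the opponent's strategy. -/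
open Finset

/-- A strategy in the Restricted Matching Pennies game: given one's own deck and the
opponent's deck, output a distribution supported on one's own remaining deck. -/
def IsMStrat {n : ℕ} (A : Deck n → Deck n → Fin n → ℝ) : Prop :=
  ∀ a b : Deck n, a ≠ 0 → IsDist (A a b) ∧ ∀ i, A a b i ≠ 0 → a i ≠ 0

/-- Expected number of matches, computed with fuel `N`. -/
def mscoreAux {n : ℕ} (A B : Deck n → Deck n → Fin n → ℝ) : ℕ → Deck n → Deck n → ℝ
  | 0, _, _ => 0
  | N + 1, a, b =>
      ∑ i ∈ Finset.univ.filter (fun i => a i ≠ 0), ∑ j ∈ Finset.univ.filter (fun j => b j ≠ 0),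
        A a b i * B b a j * ((if i = j then 1 else 0) + mscoreAux A B N (a.sub i) (b.sub j))

/-- The expected match count `E[M(a,b,A,B)]`. -/
noncomputable def mscore {n : ℕ} (A B : Deck n → Deck n → Fin n → ℝ) (a b : Deck n) : ℝ :=
  mscoreAux A B (∑ i, a i) a b

/-- The uniform strategy: choose a uniformly random card from one's own remaining deck. -/
noncomputable def uniformStrat {n : ℕ} : Deck n → Deck n → Fin n → ℝ :=
  fun a _ i => (a i : ℝ) / (∑ k, (a k : ℝ))

-- helpers
lemma deck_ne_zero_of {n : ℕ} {a : Deck n} {i : Fin n} (h : a i ≠ 0) : a ≠ 0 := by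
  intro h0; rw [h0] at h; exact h rfl

lemma deck_ne_zero_of_sum {n : ℕ} {a : Deck n} (h : ∑ i, a i ≠ 0) : a ≠ 0 := by
  intro h0; apply h; rw [h0]; simp [Pi.zero_apply]

lemma deck_sub_sum {n : ℕ} (a : Deck n) (i : Fin n) (h : a i ≠ 0) :
    ∑ k, a.sub i k = (∑ k, a k) - 1 := by
  have h1 : ∑ k, a k = a i + ∑ k ∈ univ.erase i, a k := (Finset.add_sum_erase _ _ (mem_univ i)).symm
  have h2 : ∑ k, a.sub i k = a.sub i i + ∑ k ∈ univ.erase i, a.sub i k :=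
    (Finset.add_sum_erase _ _ (mem_univ i)).symm
  have h3 : ∑ k ∈ univ.erase i, a.sub i k = ∑ k ∈ univ.erase i, a k := by
    refine Finset.sum_congr rfl (fun k hk => ?_)
    have : k ≠ i := (Finset.mem_erase.mp hk).1
    simp [Deck.sub, this]
  have h4 : a.sub i i = a i - 1 := by simp [Deck.sub]
  omega

lemma deck_sub_cast {n : ℕ} (a : Deck n) (i : Fin n) (h : a i ≠ 0) (k : Fin n) :
    ((a.sub i k : ℕ) : ℝ) = (a k : ℝ) - (if k = i then 1 else 0) := by
  by_cases hk : k = i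
  · subst hk
    simp only [Deck.sub, if_pos rfl]
    have : 1 ≤ a k := Nat.one_le_iff_ne_zero.mpr h
    push_cast [Nat.cast_sub this]
    ring
  · simp [Deck.sub, hk]

lemma cross_sum {n : ℕ} (a b : Deck n) (i j : Fin n) (ha : a i ≠ 0) (hb : b j ≠ 0) :
    ∑ k, ((a.sub i k : ℕ) : ℝ) * ((b.sub j k : ℕ) : ℝ)
      = (∑ k, (a k : ℝ) * (b k : ℝ)) - (a j : ℝ) - (b i : ℝ) + (if i = j then 1 else 0) := by
  have hterm : ∀ k, ((a.sub i k : ℕ) : ℝ) * ((b.sub j k : ℕ) : ℝ)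
      = (a k : ℝ) * b k - (if k = j then (a k : ℝ) else 0) - (if k = i then (b k : ℝ) else 0)
        + (if k = i then 1 else 0) * (if k = j then 1 else 0) := by
    intro k
    rw [deck_sub_cast a i ha k, deck_sub_cast b j hb k]
    by_cases hki : k = i <;> by_cases hkj : k = j
    · have hij : i = j := hki ▸ hkj
      simp [hki, hkj, hij]; ring
    · have hij : i ≠ j := fun h => hkj (hki.trans h)
      simp [hki, hkj, hij]; ring
    · have hij : i ≠ j := fun h => hki (hkj.trans h.symm)
      simp [hki, hkj, hij, Ne.symm hij]; ring
    · simp [hki, hkj]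
  rw [Finset.sum_congr rfl (fun k _ => hterm k)]
  have h1 : ∑ k, (if k = j then (a k : ℝ) else 0) = (a j : ℝ) := by
    rw [Finset.sum_ite_eq' univ j (fun k => (a k : ℝ))]; simp
  have h2 : ∑ k, (if k = i then (b k : ℝ) else 0) = (b i : ℝ) := by
    rw [Finset.sum_ite_eq' univ i (fun k => (b k : ℝ))]; simp
  have h3 : ∑ k, (if k = i then (1:ℝ) else 0) * (if k = j then 1 else 0) = (if i = j then 1 else 0) := by
    by_cases hij : i = j
    · subst hij
      simp only [if_pos rfl, ite_mul, one_mul, zero_mul]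
      rw [Finset.sum_ite_eq' univ i (fun _ => if _ = i then (1:ℝ) else 0)]
      simp
    · rw [if_neg hij]
      refine Finset.sum_eq_zero (fun k _ => ?_)
      by_cases hki : k = i
      · subst hki; rw [if_neg hij, mul_zero]
      · rw [if_neg hki, zero_mul]
  rw [Finset.sum_add_distrib, Finset.sum_sub_distrib, Finset.sum_sub_distrib, h1, h2, h3]

lemma uniform_isMStrat {n : ℕ} : IsMStrat (uniformStrat (n := n)) := by
  intro a b ha
  obtain ⟨i0, hi0⟩ : ∃ i, a i ≠ 0 := by
    by_contra h; push_neg at h; exact ha (funext fun i => h i)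
  have hpos : (0:ℝ) < ∑ k, (a k : ℝ) := by
    have h1 : (0:ℝ) < (a i0 : ℝ) := by exact_mod_cast Nat.pos_of_ne_zero hi0
    have h2 : (a i0 : ℝ) ≤ ∑ k, (a k : ℝ) :=
      Finset.single_le_sum (f := fun k => (a k : ℝ)) (fun k _ => by positivity) (mem_univ i0)
    linarith
  refine ⟨⟨fun i => by simp only [uniformStrat]; positivity, ?_⟩, fun i hi => ?_⟩
  · simp only [uniformStrat]
    rw [← Finset.sum_div, div_self (ne_of_gt hpos)]
  · intro h0
    apply hi
    simp [uniformStrat, h0]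

lemma mscoreAux_nonneg {n : ℕ} {A B : Deck n → Deck n → Fin n → ℝ}
    (hA : IsMStrat A) (hB : IsMStrat B) :
    ∀ N (a b : Deck n), 0 ≤ mscoreAux A B N a b := by
  intro N
  induction N with
  | zero => intro a b; simp [mscoreAux]
  | succ N ih =>
    intro a b
    rw [mscoreAux]
    refine Finset.sum_nonneg (fun i hi => Finset.sum_nonneg (fun j hj => ?_))
    have hia : a i ≠ 0 := (Finset.mem_filter.mp hi).2
    have hjb : b j ≠ 0 := (Finset.mem_filter.mp hj).2
    have h1 : 0 ≤ A a b i := (hA a b (deck_ne_zero_of hia)).1.1 i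
    have h2 : 0 ≤ B b a j := (hB b a (deck_ne_zero_of hjb)).1.1 j
    have h3 : 0 ≤ (if i = j then (1:ℝ) else 0) + mscoreAux A B N (a.sub i) (b.sub j) := by
      have := ih (a.sub i) (b.sub j)
      split_ifs <;> linarith
    positivity

lemma mscoreAux_symm {n : ℕ} (A B : Deck n → Deck n → Fin n → ℝ) :
    ∀ N (a b : Deck n), mscoreAux A B N a b = mscoreAux B A N b a := by
  intro N
  induction N with
  | zero => intro a b; simp [mscoreAux]
  | succ N ih =>
    intro a b
    rw [mscoreAux, mscoreAux, Finset.sum_comm]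
    refine Finset.sum_congr rfl (fun j _ => Finset.sum_congr rfl (fun i _ => ?_))
    rw [ih]
    have : (if i = j then (1:ℝ) else 0) = (if j = i then 1 else 0) := by simp [eq_comm]
    rw [this]; ring

lemma strat_singleton {n : ℕ} (B : Deck n → Deck n → Fin n → ℝ) (hB : IsMStrat B)
    (a b : Deck n) (hb : ∑ j, b j = 1) : ∀ j, B b a j = (b j : ℝ) := by
  have hbne : b ≠ 0 := deck_ne_zero_of_sum (by omega)
  obtain ⟨j0, hj0⟩ : ∃ j, b j ≠ 0 := by
    by_contra h; push_neg at h; exact hbne (funext fun j => h j)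
  have herase : ∀ (f : Fin n → ℕ), ∑ k, f k = f j0 + ∑ k ∈ univ.erase j0, f k :=
    fun f => (Finset.add_sum_erase _ _ (mem_univ j0)).symm
  have hall : ∀ j, j ≠ j0 → b j = 0 := by
    intro j hj
    have h2 := herase b
    have h3 : b j ≤ ∑ k ∈ univ.erase j0, b k :=
      Finset.single_le_sum (fun _ _ => Nat.zero_le _) (Finset.mem_erase.mpr ⟨hj, mem_univ j⟩)
    omega
  have hbj0 : b j0 = 1 := by
    have h2 := herase b
    have h3 : ∑ k ∈ univ.erase j0, b k = 0 :=
      Finset.sum_eq_zero (fun k hk => hall k (Finset.mem_erase.mp hk).1)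
    omega
  obtain ⟨⟨_, hsum⟩, hsupp⟩ := hB b a hbne
  have hq0 : ∀ j, j ≠ j0 → B b a j = 0 := by
    intro j hj
    by_contra h
    exact (hsupp j h) (hall j hj)
  have hq1 : B b a j0 = 1 := by
    have h2 : ∑ j, B b a j = B b a j0 + ∑ k ∈ univ.erase j0, B b a k :=
      (Finset.add_sum_erase _ _ (mem_univ j0)).symm
    have h3 : ∑ k ∈ univ.erase j0, B b a k = 0 :=
      Finset.sum_eq_zero (fun k hk => hq0 k (Finset.mem_erase.mp hk).1)
    rw [hsum, h3] at h2
    linarith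
  intro j
  by_cases h : j = j0
  · subst h; rw [hq1, hbj0]; norm_num
  · rw [hq0 j h, hall j h]; norm_num

lemma key {n : ℕ} (B : Deck n → Deck n → Fin n → ℝ) (hB : IsMStrat B) :
    ∀ S (a b : Deck n), ∑ i, a i = S → ∑ i, b i = S →
      (S : ℝ) * mscoreAux uniformStrat B S a b = ∑ i, (a i : ℝ) * (b i : ℝ) := by
  intro S
  induction S with
  | zero =>
    intro a b ha hb
    have h0 : ∀ i ∈ univ, a i = 0 := Finset.sum_eq_zero_iff.mp ha
    have : ∀ i, a i = 0 := fun i => h0 i (mem_univ i)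
    simp [this]
  | succ S ih =>
    intro a b ha hb
    have hbne : b ≠ 0 := deck_ne_zero_of_sum (by omega)
    obtain ⟨⟨hqnn, hqsum⟩, hqsupp⟩ := hB b a hbne
    have hsa : (∑ k, (a k : ℝ)) = (S : ℝ) + 1 := by
      rw [← Nat.cast_sum, ha]; push_cast; ring
    have hU : ∀ i, uniformStrat a b i = (a i : ℝ) / ((S:ℝ)+1) := by
      intro i; simp only [uniformStrat, hsa]
    set P : ℝ := ∑ k, (a k : ℝ) * (b k : ℝ) with hP
    have hrec : ∀ i, a i ≠ 0 → ∀ j, b j ≠ 0 →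
        mscoreAux uniformStrat B S (a.sub i) (b.sub j)
          = (P - (a j : ℝ) - (b i : ℝ) + (if i = j then 1 else 0)) / (S : ℝ) := by
      intro i hi j hj
      have hsa' : ∑ k, a.sub i k = S := by have := deck_sub_sum a i hi; omega
      have hsb' : ∑ k, b.sub j k = S := by have := deck_sub_sum b j hj; omega
      have h1 := ih (a.sub i) (b.sub j) hsa' hsb'
      rw [cross_sum a b i j hi hj] at h1
      rcases eq_or_ne S 0 with h0 | h0
      · subst h0
        simp only [Nat.cast_zero, zero_mul] at h1
        have hz : mscoreAux uniformStrat B 0 (a.sub i) (b.sub j) = 0 := by simp [mscoreAux]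
        rw [hz, ← h1]
        simp
      · have hs0 : (S:ℝ) ≠ 0 := Nat.cast_ne_zero.mpr h0
        field_simp
        linarith [h1]
    rw [mscoreAux]
    have hstep : (∑ i ∈ univ.filter (fun i => a i ≠ 0), ∑ j ∈ univ.filter (fun j => b j ≠ 0),
        uniformStrat a b i * B b a j *
          ((if i = j then (1:ℝ) else 0) + mscoreAux uniformStrat B S (a.sub i) (b.sub j)))
        = ∑ i, ∑ j, ((a i : ℝ) * B b a j *
            ((if i = j then (1:ℝ) else 0)
              + (P - (a j:ℝ) - (b i:ℝ) + (if i = j then 1 else 0)) / (S:ℝ))) / ((S:ℝ)+1) := by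
      rw [Finset.sum_filter]
      refine Finset.sum_congr rfl (fun i _ => ?_)
      by_cases hi : a i ≠ 0
      · rw [if_pos hi, Finset.sum_filter]
        refine Finset.sum_congr rfl (fun j _ => ?_)
        by_cases hj : b j ≠ 0
        · rw [if_pos hj, hrec i hi j hj, hU i]
          ring
        · rw [if_neg hj]
          push_neg at hj
          have hq : B b a j = 0 := by
            by_contra h; exact (hqsupp j h) hj
          rw [hq]; ring
      · rw [if_neg hi]
        push_neg at hi
        refine (Finset.sum_eq_zero (fun j _ => ?_)).symm
        simp [hi]
    rw [hstep]
    simp only [← Finset.sum_div]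
    have hc : ((S:ℝ)+1) ≠ 0 := by positivity
    have hT : (∑ i, ∑ j, (a i : ℝ) * B b a j *
            ((if i = j then (1:ℝ) else 0)
              + (P - (a j:ℝ) - (b i:ℝ) + (if i = j then 1 else 0)) / (S:ℝ))) = P := by
      rcases eq_or_ne S 0 with h0 | h0
      · subst h0
        simp only [Nat.cast_zero, div_zero, add_zero]
        have hq := strat_singleton B hB a b hb
        simp only [hq]
        rw [hP]
        refine Finset.sum_congr rfl (fun i _ => ?_)
        rw [Finset.sum_eq_single i]
        · simp
        · intro j _ hji
          simp [Ne.symm hji]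
        · intro h; exact absurd (mem_univ i) h
      · have hs0 : (S:ℝ) ≠ 0 := Nat.cast_ne_zero.mpr h0
        set Q : ℝ := ∑ j, (a j : ℝ) * B b a j with hQ
        have hinner : ∀ i, (∑ j, (a i : ℝ) * B b a j *
              ((if i = j then (1:ℝ) else 0)
                + (P - (a j:ℝ) - (b i:ℝ) + (if i = j then 1 else 0)) / (S:ℝ)))
            = (1 + 1/(S:ℝ)) * ((a i:ℝ) * B b a i) + (a i:ℝ) * (P/(S:ℝ))
              - (a i:ℝ) * (Q/(S:ℝ)) - ((a i:ℝ) * (b i:ℝ)) * (1/(S:ℝ)) := by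
          intro i
          have hterm : ∀ j, (a i : ℝ) * B b a j *
                ((if i = j then (1:ℝ) else 0)
                  + (P - (a j:ℝ) - (b i:ℝ) + (if i = j then 1 else 0)) / (S:ℝ))
              = (if i = j then (1 + 1/(S:ℝ)) * ((a i:ℝ) * B b a j) else 0)
                + ((a i:ℝ) * (P/(S:ℝ))) * B b a j
                - ((a i:ℝ) / (S:ℝ)) * ((a j:ℝ) * B b a j)
                - (((a i:ℝ) * (b i:ℝ)) * (1/(S:ℝ))) * B b a j := by
            intro j
            split_ifs with h
            · field_simp; ring
            · field_simp; ring
          rw [Finset.sum_congr rfl (fun j _ => hterm j)]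
          rw [Finset.sum_sub_distrib, Finset.sum_sub_distrib, Finset.sum_add_distrib]
          rw [Finset.sum_ite_eq univ i (fun j => (1 + 1/(S:ℝ)) * ((a i:ℝ) * B b a j))]
          rw [← Finset.mul_sum, ← Finset.mul_sum, ← Finset.mul_sum, hqsum, ← hQ]
          simp only [if_pos (mem_univ i), mul_one]
          field_simp
        rw [Finset.sum_congr rfl (fun i _ => hinner i)]
        rw [Finset.sum_sub_distrib, Finset.sum_sub_distrib, Finset.sum_add_distrib]
        rw [← Finset.mul_sum, ← Finset.sum_mul, ← Finset.sum_mul, ← Finset.sum_mul]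
        rw [hsa, ← hQ, ← hP]
        field_simp
        ring
    rw [hT]
    push_cast
    rw [← mul_div_assoc, mul_div_cancel_left₀ _ hc]

/-- with decks of `m` copies of each of `n` types, the value of the
Restricted Matching Pennies game is `m`, and the uniform strategy guarantees expected
match count exactly `m` against every opponent strategy. -/
theorem stmt13 (n m : ℕ) (hn : 0 < n) (hm : 0 < m) :
    sSup {x : ℝ | ∃ A, IsMStrat A ∧
        sInf {y : ℝ | ∃ B, IsMStrat B ∧
          mscore A B (fun _ : Fin n => m) (fun _ : Fin n => m) = y} = x} = (m : ℝ) ∧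
      (∀ B, IsMStrat B → mscore uniformStrat B (fun _ : Fin n => m) (fun _ : Fin n => m) = (m : ℝ)) ∧
      (∀ A, IsMStrat A → mscore A uniformStrat (fun _ : Fin n => m) (fun _ : Fin n => m) = (m : ℝ)) := by
  set a0 : Deck n := (fun _ => m) with ha0
  have hsum : ∑ i, a0 i = n * m := by
    simp [ha0, Finset.sum_const, Finset.card_univ, mul_comm]
  have hc : ((n * m : ℕ) : ℝ) ≠ 0 := by
    have : n * m ≠ 0 := by positivity
    exact_mod_cast this
  have hPsum : (∑ i, (a0 i : ℝ) * (a0 i : ℝ)) = ((n * m : ℕ) : ℝ) * (m : ℝ) := by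
    simp [ha0, Finset.sum_const, Finset.card_univ]
    ring
  have hmU : ∀ B, IsMStrat B → mscore uniformStrat B a0 a0 = (m : ℝ) := by
    intro B hB
    have h := key B hB (n * m) a0 a0 hsum hsum
    rw [hPsum] at h
    rw [mscore, hsum]
    exact mul_left_cancel₀ hc h
  have hmA : ∀ A, IsMStrat A → mscore A uniformStrat a0 a0 = (m : ℝ) := by
    intro A hA
    have h := key A hA (n * m) a0 a0 hsum hsum
    rw [hPsum] at h
    rw [mscore, hsum, mscoreAux_symm]
    exact mul_left_cancel₀ hc h
  refine ⟨?_, hmU, hmA⟩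
  set inner : (Deck n → Deck n → Fin n → ℝ) → Set ℝ :=
    fun A => {y : ℝ | ∃ B, IsMStrat B ∧ mscore A B a0 a0 = y} with hinner
  have hmem_inner : ∀ A, IsMStrat A → (m : ℝ) ∈ inner A := by
    intro A hA
    exact ⟨uniformStrat, uniform_isMStrat, hmA A hA⟩
  have hbdd : ∀ A, IsMStrat A → BddBelow (inner A) := by
    intro A hA
    refine ⟨0, fun y hy => ?_⟩
    obtain ⟨B, hB, hy⟩ := hy
    rw [← hy]
    exact mscoreAux_nonneg hA hB _ a0 a0
  have hub : ∀ x ∈ {x : ℝ | ∃ A, IsMStrat A ∧ sInf (inner A) = x}, x ≤ (m : ℝ) := by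
    rintro x ⟨A, hA, rfl⟩
    exact csInf_le (hbdd A hA) (hmem_inner A hA)
  have hinner_unif : inner uniformStrat = {(m : ℝ)} := by
    ext y
    constructor
    · rintro ⟨B, hB, rfl⟩
      exact hmU B hB
    · rintro rfl
      exact hmem_inner _ uniform_isMStrat
  have hmem : (m : ℝ) ∈ {x : ℝ | ∃ A, IsMStrat A ∧ sInf (inner A) = x} := by
    refine ⟨uniformStrat, uniform_isMStrat, ?_⟩
    rw [hinner_unif, csInf_singleton]
  exact le_antisymm (Real.sSup_le hub (by positivity)) (le_csSup ⟨(m:ℝ), hub⟩ hmem)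
end

section
/- For fixed m as n → ∞, the optimal adversarial maximum score satisfies min_S max_G E[C_{m,n}(G,S)] = max_G E[C_{m,n}(G, G_greedy)] ~ log n, where the deck holds m copies of each of n card types. -/
/-! Let `X_i ∼ Erlang(d i)` be independent (the arrival time of the `d i`-th point of a unit-rate
Poisson process) and `V d = E[max_i X_i]`. The drops `V d - V (d.sub j)` are nonnegative and sum to
`1` over the support of `d`, being the integrals of the terms of the product rule for the density
of the maximum. So they behave like a distribution of guesses, and `V` is the value of the game:
against the greedy Shuffler every guess scores `1 / k` in expectation (`k` types left), which is
the average drop, so no Guesser gets more than `V`; against any Shuffler `S`, guessing a most likely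
card scores `max_j S_j ≥ ∑_j S_j · drop_j`, so some Guesser gets at least `V`.
For the constant deck, `V` is the expected maximum of `n` i.i.d. Erlang(`m`) variables, which is
`(1 + o(1)) log n` because their tail lies between `e^{-t}` and `C_ε e^{-(1-ε) t}`. -/

open Finset

open Real MeasureTheory Set Filter Topology

/-- `P(N_t < c)` for a unit-rate Poisson process `N`: the survival function of the
Erlang(`c`) distribution, i.e. of the arrival time of the `c`-th point. -/
noncomputable def erlangTail (c : ℕ) (t : ℝ) : ℝ :=
  exp (-t) * ∑ j ∈ range c, t ^ j / j.factorial

section erlangTail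

variable {c : ℕ} {t : ℝ}

@[simp] lemma erlangTail_zero_left (t : ℝ) : erlangTail 0 t = 0 := by simp [erlangTail]

@[simp] lemma erlangTail_one_left (t : ℝ) : erlangTail 1 t = exp (-t) := by simp [erlangTail]

lemma erlangTail_zero_right (hc : 0 < c) : erlangTail c 0 = 1 := by
  obtain ⟨c, rfl⟩ := Nat.exists_eq_add_of_lt hc
  simp [erlangTail, sum_range_succ']

lemma erlangTail_nonneg (ht : 0 ≤ t) : 0 ≤ erlangTail c t := by
  unfold erlangTail; positivity

lemma erlangTail_le_one (ht : 0 ≤ t) : erlangTail c t ≤ 1 :=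
  calc erlangTail c t ≤ exp (-t) * exp t :=
        mul_le_mul_of_nonneg_left (sum_le_exp_of_nonneg ht c) (exp_nonneg _)
    _ = 1 := by rw [← exp_add, neg_add_cancel, exp_zero]

lemma erlangTail_mono {c c' : ℕ} (h : c ≤ c') (ht : 0 ≤ t) :
    erlangTail c t ≤ erlangTail c' t := by
  unfold erlangTail
  gcongr

lemma continuous_erlangTail (c : ℕ) : Continuous (erlangTail c) := by
  unfold erlangTail; fun_prop

lemma hasDerivAt_erlangTail (c : ℕ) (t : ℝ) :
    HasDerivAt (erlangTail c) (erlangTail (c - 1) t - erlangTail c t) t := by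
  have hsum : HasDerivAt (fun t : ℝ => ∑ j ∈ range c, t ^ j / j.factorial)
      (∑ j ∈ range (c - 1), t ^ j / j.factorial) t := by
    refine (HasDerivAt.fun_sum fun j _ => (hasDerivAt_pow j t).div_const _).congr_deriv ?_
    cases c with
    | zero => simp
    | succ c =>
      rw [sum_range_succ']
      simp only [CharP.cast_eq_zero, zero_mul, zero_div, add_zero, Nat.add_sub_cancel]
      refine sum_congr rfl fun j _ => ?_
      push_cast [Nat.factorial_succ]
      field_simp
  refine (((hasDerivAt_neg t).exp).mul hsum).congr_deriv ?_
  simp only [erlangTail]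
  ring

lemma tendsto_erlangTail_atTop (c : ℕ) : Tendsto (erlangTail c) atTop (𝓝 0) := by
  have := tendsto_finsetSum (range c) fun j _ =>
    (tendsto_pow_mul_exp_neg_atTop_nhds_zero j).div_const (j.factorial : ℝ)
  simp only [zero_div, sum_const_zero] at this
  refine this.congr fun t => ?_
  rw [erlangTail, mul_sum]
  exact sum_congr rfl fun j _ => by ring

lemma erlangTail_le_exp {a : ℝ} (ha : a < 1) (ht : 0 ≤ t) :
    erlangTail c t ≤ (∑ j ∈ range c, (1 - a)⁻¹ ^ j) * exp (-a * t) := by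
  have hterm (j : ℕ) : t ^ j / j.factorial ≤ (1 - a)⁻¹ ^ j * exp ((1 - a) * t) := by
    have h := pow_div_factorial_le_exp _ (mul_nonneg (sub_nonneg.2 ha.le) ht) j
    rw [mul_pow, mul_div_assoc] at h
    rwa [inv_pow, le_inv_mul_iff₀ (pow_pos (sub_pos.2 ha) j)]
  calc erlangTail c t ≤ exp (-t) * ∑ j ∈ range c, (1 - a)⁻¹ ^ j * exp ((1 - a) * t) :=
        mul_le_mul_of_nonneg_left (sum_le_sum fun j _ => hterm j) (exp_nonneg _)
    _ = (∑ j ∈ range c, (1 - a)⁻¹ ^ j) * exp (-a * t) := by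
        rw [← sum_mul, mul_comm, mul_assoc, ← exp_add]; ring_nf

lemma integrableOn_erlangTail (c : ℕ) : IntegrableOn (erlangTail c) (Ioi 0) := by
  refine Integrable.mono'
    ((exp_neg_integrableOn_Ioi 0 (by norm_num : (0 : ℝ) < 2⁻¹)).const_mul
      (∑ j ∈ range c, (1 - 2⁻¹ : ℝ)⁻¹ ^ j))
    (continuous_erlangTail c).aestronglyMeasurable ?_
  filter_upwards [ae_restrict_mem measurableSet_Ioi] with t (ht : 0 < t)
  rw [norm_of_nonneg (erlangTail_nonneg ht.le)]
  exact erlangTail_le_exp (by norm_num) ht.le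

end erlangTail

lemma one_sub_prod_one_sub_le_sum {ι : Type*} (s : Finset ι) {x : ι → ℝ}
    (h0 : ∀ i ∈ s, 0 ≤ x i) (h1 : ∀ i ∈ s, x i ≤ 1) :
    1 - ∏ i ∈ s, (1 - x i) ≤ ∑ i ∈ s, x i := by
  induction s using Finset.cons_induction with
  | empty => simp
  | cons a s ha ih =>
    simp only [forall_mem_cons] at h0 h1
    rw [prod_cons, sum_cons]
    have hprod : ∏ i ∈ s, (1 - x i) ≤ 1 :=
      prod_le_one (fun i hi => sub_nonneg.2 (h1.2 i hi)) fun i hi => sub_le_self _ (h0.2 i hi)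
    linarith [ih h0.2 h1.2, mul_le_of_le_one_right h0.1 hprod]

namespace Deck

variable {n : ℕ} (d : Deck n) {i j : Fin n}

abbrev support : Finset (Fin n) := univ.filter fun j => d j ≠ 0

variable {d}

lemma support_nonempty (hd : d ≠ 0) : d.support.Nonempty := by
  obtain ⟨i, hi⟩ := Function.ne_iff.1 hd
  exact ⟨i, by simpa using hi⟩

@[simp] lemma sub_apply_self_s19 : d.sub j j = d j - 1 := by simp [Deck.sub]

lemma sub_apply_of_ne_s19 (h : i ≠ j) : d.sub j i = d i := by simp [Deck.sub, h]

lemma sub_of_eq_zero (h : d j = 0) : d.sub j = d := by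
  funext i
  by_cases hij : i = j
  · subst hij; simp [h]
  · exact sub_apply_of_ne_s19 hij

lemma sum_sub (h : d j ≠ 0) : ∑ i, d.sub j i = ∑ i, d i - 1 := by
  rw [← add_sum_erase _ _ (mem_univ j), ← add_sum_erase _ d (mem_univ j), sub_apply_self_s19,
    sum_congr rfl fun i hi => sub_apply_of_ne_s19 (ne_of_mem_erase hi)]
  omega

lemma sum_sub_of_sum_eq_succ {N : ℕ} (h : ∑ i, d i = N + 1) (hj : j ∈ d.support) :
    ∑ i, d.sub j i = N := by
  rw [sum_sub (by simpa using hj), h, Nat.add_sub_cancel]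

lemma ne_zero_of_sum_eq_succ {N : ℕ} (h : ∑ i, d i = N + 1) : d ≠ 0 := by
  rintro rfl; simp at h

lemma eq_zero_of_sum_eq_zero (h : ∑ i, d i = 0) : d = 0 :=
  funext fun i => sum_eq_zero_iff.1 h i (mem_univ i)

end Deck

/-- The CDF of `max_i X_i` for independent `X_i ∼ Erlang(d i)`. -/
noncomputable def maxCDF {n : ℕ} (d : Deck n) (t : ℝ) : ℝ := ∏ i, (1 - erlangTail (d i) t)

/-- `E[max_i X_i]` for independent `X_i ∼ Erlang(d i)`. -/
noncomputable def deckValue {n : ℕ} (d : Deck n) : ℝ := ∫ t in Ioi 0, (1 - maxCDF d t)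

section maxCDF

variable {n : ℕ} {d : Deck n} {t : ℝ}

lemma maxCDF_nonneg (ht : 0 ≤ t) : 0 ≤ maxCDF d t :=
  prod_nonneg fun _ _ => sub_nonneg.2 (erlangTail_le_one ht)

lemma maxCDF_le_one (ht : 0 ≤ t) : maxCDF d t ≤ 1 :=
  prod_le_one (fun _ _ => sub_nonneg.2 (erlangTail_le_one ht))
    fun _ _ => sub_le_self _ (erlangTail_nonneg ht)

lemma one_sub_maxCDF_le_sum (ht : 0 ≤ t) : 1 - maxCDF d t ≤ ∑ i, erlangTail (d i) t :=
  one_sub_prod_one_sub_le_sum _ (fun _ _ => erlangTail_nonneg ht) fun _ _ => erlangTail_le_one ht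

lemma continuous_maxCDF (d : Deck n) : Continuous (maxCDF d) := by
  unfold maxCDF
  have := continuous_erlangTail
  fun_prop

lemma maxCDF_zero_right (hd : d ≠ 0) : maxCDF d 0 = 0 := by
  obtain ⟨i, hi⟩ := Function.ne_iff.1 hd
  exact prod_eq_zero (mem_univ i) (by rw [erlangTail_zero_right (Nat.pos_of_ne_zero hi), sub_self])

lemma tendsto_maxCDF_atTop (d : Deck n) : Tendsto (maxCDF d) atTop (𝓝 1) := by
  show Tendsto (fun t => ∏ i, (1 - erlangTail (d i) t)) atTop (𝓝 1)
  simpa using tendsto_finsetProd univ fun i _ =>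
    (tendsto_erlangTail_atTop (d i)).const_sub (1 : ℝ)

lemma maxCDF_sub_sub_maxCDF (d : Deck n) (j : Fin n) (t : ℝ) :
    maxCDF (d.sub j) t - maxCDF d t =
      (erlangTail (d j) t - erlangTail (d j - 1) t) *
        ∏ i ∈ univ.erase j, (1 - erlangTail (d i) t) := by
  simp only [maxCDF, ← mul_prod_erase univ _ (mem_univ j), Deck.sub_apply_self_s19]
  rw [prod_congr rfl fun i hi => by rw [Deck.sub_apply_of_ne_s19 (ne_of_mem_erase hi)]]
  ring

lemma maxCDF_le_maxCDF_sub (j : Fin n) (ht : 0 ≤ t) : maxCDF d t ≤ maxCDF (d.sub j) t := by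
  rw [← sub_nonneg, maxCDF_sub_sub_maxCDF]
  exact mul_nonneg (sub_nonneg.2 (erlangTail_mono (Nat.sub_le _ _) ht))
    (prod_nonneg fun _ _ => sub_nonneg.2 (erlangTail_le_one ht))

/-- Since `erlangTail' c = erlangTail (c - 1) - erlangTail c`, each term of the product rule is
the change of `maxCDF` when one card is removed. -/
lemma hasDerivAt_maxCDF (d : Deck n) (t : ℝ) :
    HasDerivAt (maxCDF d) (∑ j, (maxCDF (d.sub j) t - maxCDF d t)) t := by
  refine (HasDerivAt.fun_finsetProd fun i _ => (hasDerivAt_erlangTail (d i) t).const_sub 1)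
    |>.congr_deriv (sum_congr rfl fun j _ => ?_)
  rw [maxCDF_sub_sub_maxCDF, smul_eq_mul, neg_sub, mul_comm]

lemma integrableOn_one_sub_maxCDF (d : Deck n) :
    IntegrableOn (fun t => 1 - maxCDF d t) (Ioi 0) := by
  refine Integrable.mono' (integrable_finsetSum univ fun i _ => integrableOn_erlangTail (d i))
    (continuous_const.sub (continuous_maxCDF d)).aestronglyMeasurable ?_
  filter_upwards [ae_restrict_mem measurableSet_Ioi] with t (ht : 0 < t)
  rw [norm_of_nonneg (sub_nonneg.2 (maxCDF_le_one ht.le))]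
  exact one_sub_maxCDF_le_sum ht.le

end maxCDF

section deckValue

variable {n : ℕ} {d : Deck n}

lemma deckValue_nonneg (d : Deck n) : 0 ≤ deckValue d :=
  setIntegral_nonneg measurableSet_Ioi fun _ ht => sub_nonneg.2 (maxCDF_le_one (le_of_lt ht))

@[simp] lemma deckValue_zero : deckValue (0 : Deck n) = 0 := by
  simp [deckValue, maxCDF]

lemma deckValue_sub_deckValue_sub (d : Deck n) (j : Fin n) :
    deckValue d - deckValue (d.sub j) = ∫ t in Ioi 0, (maxCDF (d.sub j) t - maxCDF d t) := by
  rw [deckValue, deckValue, ← integral_sub (integrableOn_one_sub_maxCDF d)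
    (integrableOn_one_sub_maxCDF (d.sub j))]
  congr 1 with t
  ring

lemma deckValue_sub_le (d : Deck n) (j : Fin n) : deckValue (d.sub j) ≤ deckValue d := by
  rw [← sub_nonneg, deckValue_sub_deckValue_sub]
  exact setIntegral_nonneg measurableSet_Ioi fun t ht =>
    sub_nonneg.2 (maxCDF_le_maxCDF_sub j (le_of_lt ht))

lemma sum_deckValue_sub_deckValue_sub (hd : d ≠ 0) :
    ∑ j ∈ d.support, (deckValue d - deckValue (d.sub j)) = 1 := by
  have hint (j : Fin n) : IntegrableOn (fun t => maxCDF (d.sub j) t - maxCDF d t) (Ioi 0) :=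
    ((integrableOn_one_sub_maxCDF d).sub (integrableOn_one_sub_maxCDF (d.sub j))).congr_fun
      (fun t _ => by simp) measurableSet_Ioi
  rw [sum_subset (filter_subset _ univ) fun j _ hj => by
      rw [Deck.sub_of_eq_zero (by simpa using hj), sub_self]]
  simp only [deckValue_sub_deckValue_sub]
  rw [← integral_finsetSum _ fun j _ => hint j,
    integral_Ioi_of_hasDerivAt_of_tendsto (continuous_maxCDF d).continuousWithinAt
      (fun t _ => hasDerivAt_maxCDF d t) (integrable_finsetSum _ fun j _ => hint j)
      (tendsto_maxCDF_atTop d), maxCDF_zero_right hd, sub_zero]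

end deckValue

section game

variable {n : ℕ} {G S : Strat n} {d : Deck n}

lemma scoreAux_succ (G S : Strat n) (N : ℕ) (d : Deck n) :
    scoreAux G S (N + 1) d = ∑ j ∈ d.support, S d j * (G d j + scoreAux G S N (d.sub j)) := rfl

lemma IsDist.sum_le_one {p : Fin n → ℝ} (hp : IsDist p) (s : Finset (Fin n)) :
    ∑ i ∈ s, p i ≤ 1 :=
  hp.2 ▸ sum_le_univ_sum_of_nonneg hp.1

lemma IsShuffler.sum_support (hS : IsShuffler S) (hd : d ≠ 0) :
    ∑ j ∈ d.support, S d j = 1 := by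
  rw [← (hS d hd).1.2]
  exact sum_subset (filter_subset _ _) fun j _ hj =>
    not_not.1 fun h => hj (by simpa using (hS d hd).2 j h)

lemma scoreAux_le (hG : IsGuesser G) (hS : IsShuffler S) (N : ℕ) (d : Deck n) :
    scoreAux G S N d ≤ N := by
  induction N generalizing d with
  | zero => simp [scoreAux]
  | succ N ih =>
    rcases eq_or_ne d 0 with rfl | hd
    · simp [scoreAux_succ, Deck.support]; positivity
    calc scoreAux G S (N + 1) d ≤ ∑ j ∈ d.support, S d j * (1 + N) := by
          refine sum_le_sum fun j _ => mul_le_mul_of_nonneg_left ?_ ((hS d hd).1.1 j)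
          exact add_le_add (by simpa using (hG d hd).sum_le_one {j}) (ih _)
      _ = (N + 1 : ℕ) := by rw [← sum_mul, hS.sum_support hd]; push_cast; ring

lemma scoreAux_succ_sub_deckValue (hS : IsShuffler S) (hd : d ≠ 0) (N : ℕ) :
    scoreAux G S (N + 1) d - deckValue d =
      ∑ j ∈ d.support, S d j * (G d j - (deckValue d - deckValue (d.sub j))) +
      ∑ j ∈ d.support, S d j * (scoreAux G S N (d.sub j) - deckValue (d.sub j)) := by
  rw [scoreAux_succ, ← sum_add_distrib]
  conv_lhs => rw [← one_mul (deckValue d), ← hS.sum_support hd, sum_mul, ← sum_sub_distrib]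
  exact sum_congr rfl fun j _ => by ring

lemma scoreAux_le_deckValue (hS : IsShuffler S)
    (hstep : ∀ d : Deck n, d ≠ 0 → ∑ j ∈ d.support, S d j * G d j ≤
      ∑ j ∈ d.support, S d j * (deckValue d - deckValue (d.sub j))) (N : ℕ) (d : Deck n)
    (hN : ∑ i, d i = N) : scoreAux G S N d ≤ deckValue d := by
  induction N generalizing d with
  | zero => exact deckValue_nonneg d
  | succ N ih =>
    have hd := Deck.ne_zero_of_sum_eq_succ hN
    rw [← sub_nonpos, scoreAux_succ_sub_deckValue hS hd]
    refine add_nonpos ?_ (sum_nonpos fun j hj => mul_nonpos_of_nonneg_of_nonpos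
      ((hS d hd).1.1 j) (sub_nonpos.2 (ih _ (Deck.sum_sub_of_sum_eq_succ hN hj))))
    rw [sum_congr rfl fun j _ => mul_sub (S d j) _ _, sum_sub_distrib]
    exact sub_nonpos.2 (hstep d hd)

lemma deckValue_le_scoreAux (hS : IsShuffler S)
    (hstep : ∀ d : Deck n, d ≠ 0 →
      ∑ j ∈ d.support, S d j * (deckValue d - deckValue (d.sub j)) ≤
        ∑ j ∈ d.support, S d j * G d j) (N : ℕ) (d : Deck n)
    (hN : ∑ i, d i = N) : deckValue d ≤ scoreAux G S N d := by
  induction N generalizing d with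
  | zero =>
    rw [Deck.eq_zero_of_sum_eq_zero hN, deckValue_zero]
    exact le_rfl
  | succ N ih =>
    have hd := Deck.ne_zero_of_sum_eq_succ hN
    rw [← sub_nonneg, scoreAux_succ_sub_deckValue hS hd]
    refine add_nonneg ?_ (sum_nonneg fun j hj => mul_nonneg
      ((hS d hd).1.1 j) (sub_nonneg.2 (ih _ (Deck.sum_sub_of_sum_eq_succ hN hj))))
    rw [sum_congr rfl fun j _ => mul_sub (S d j) _ _, sum_sub_distrib]
    exact sub_nonneg.2 (hstep d hd)

end game

section strategies

variable {n : ℕ} {d : Deck n}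

lemma greedy_of_mem_support {j : Fin n} (hj : j ∈ d.support) :
    greedy d j = (#d.support : ℝ)⁻¹ := by
  simp_all [greedy]

lemma greedy_isShuffler : IsShuffler (greedy (n := n)) := by
  intro d hd
  have hk : (#d.support : ℝ) ≠ 0 :=
    Nat.cast_ne_zero.2 (Deck.support_nonempty hd).card_pos.ne'
  refine ⟨⟨fun i => by unfold greedy; split_ifs <;> positivity, ?_⟩, fun i hi => ?_⟩
  · have hzero (j : Fin n) (_ : j ∈ Finset.univ) (hj : j ∉ d.support) : greedy d j = 0 := by
      simp_all [greedy]
    rw [← sum_subset (filter_subset _ univ) hzero,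
      sum_congr rfl fun j hj => greedy_of_mem_support hj, sum_const, nsmul_eq_mul,
      mul_inv_cancel₀ hk]
  · by_contra h
    simp [greedy, h] at hi

lemma greedy_step {G : Strat n} (hG : IsGuesser G) (hd : d ≠ 0) :
    ∑ j ∈ d.support, greedy d j * G d j ≤
      ∑ j ∈ d.support, greedy d j * (deckValue d - deckValue (d.sub j)) := by
  have huniform (f : Fin n → ℝ) :
      ∑ j ∈ d.support, greedy d j * f j =
        (#d.support : ℝ)⁻¹ * ∑ j ∈ d.support, f j := by
    rw [mul_sum]
    exact sum_congr rfl fun j hj => by rw [greedy_of_mem_support hj]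
  rw [huniform, huniform, sum_deckValue_sub_deckValue_sub hd, mul_one]
  exact mul_le_of_le_one_right (inv_nonneg.2 (Nat.cast_nonneg _)) ((hG d hd).sum_le_one _)

noncomputable def bestResponse (S : Strat n) : Strat n := fun d =>
  if h : d.support.Nonempty then Pi.single (d.support.exists_max_image (S d) h).choose 1 else 0

lemma bestResponse_isGuesser (S : Strat n) : IsGuesser (bestResponse S) := by
  intro d hd
  simp only [bestResponse, dif_pos (Deck.support_nonempty hd)]
  refine ⟨fun i => ?_, by simp⟩
  rw [Pi.single_apply]
  split_ifs <;> norm_num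

lemma bestResponse_step {S : Strat n} (hd : d ≠ 0) :
    ∑ j ∈ d.support, S d j * (deckValue d - deckValue (d.sub j)) ≤
      ∑ j ∈ d.support, S d j * bestResponse S d j := by
  have h := Deck.support_nonempty hd
  obtain ⟨hmem, hmax⟩ := (d.support.exists_max_image (S d) h).choose_spec
  simp only [bestResponse, dif_pos h, Pi.single_apply, mul_ite, mul_one, mul_zero,
    sum_ite_eq', if_pos hmem]
  calc ∑ j ∈ d.support, S d j * (deckValue d - deckValue (d.sub j))
      ≤ ∑ j ∈ d.support, S d (d.support.exists_max_image (S d) h).choose *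
          (deckValue d - deckValue (d.sub j)) :=
        sum_le_sum fun j hj => mul_le_mul_of_nonneg_right (hmax j hj)
          (sub_nonneg.2 (deckValue_sub_le d j))
    _ = _ := by rw [← mul_sum, sum_deckValue_sub_deckValue_sub hd, mul_one]

lemma fval_greedy (d : Deck n) : fval greedy d = deckValue d := by
  have hle : ∀ G, IsGuesser G → score G greedy d ≤ deckValue d := fun G hG =>
    scoreAux_le_deckValue greedy_isShuffler (fun _ hd => greedy_step hG hd) _ d rfl
  have hge : deckValue d ≤ score (bestResponse greedy) greedy d :=
    deckValue_le_scoreAux greedy_isShuffler (fun _ hd => bestResponse_step hd) _ d rfl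
  refine le_antisymm (csSup_le ⟨_, _, bestResponse_isGuesser greedy, rfl⟩ ?_) ?_
  · rintro x ⟨G, hG, rfl⟩
    exact hle G hG
  · refine hge.trans (le_csSup ⟨deckValue d, ?_⟩ ⟨_, bestResponse_isGuesser greedy, rfl⟩)
    rintro x ⟨G, hG, rfl⟩
    exact hle G hG

lemma deckValue_le_fval {S : Strat n} (hS : IsShuffler S) (d : Deck n) :
    deckValue d ≤ fval S d := by
  refine (deckValue_le_scoreAux hS (fun _ hd => bestResponse_step hd) _ d rfl).trans
    (le_csSup ⟨(∑ i, d i : ℕ), ?_⟩ ⟨_, bestResponse_isGuesser S, rfl⟩)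
  rintro x ⟨G, hG, rfl⟩
  exact scoreAux_le hG hS _ d

lemma fopt_eq_fval_greedy (d : Deck n) : fopt d = fval greedy d := by
  refine le_antisymm (csInf_le ⟨fval greedy d, ?_⟩ ⟨greedy, greedy_isShuffler, rfl⟩)
    (le_csInf ⟨_, greedy, greedy_isShuffler, rfl⟩ ?_) <;>
  · rintro x ⟨S, hS, rfl⟩
    exact fval_greedy d ▸ deckValue_le_fval hS d

end strategies

section integral

variable {f : ℝ → ℝ} {T : ℝ}

lemma integral_Ioi_le_add_of_le_exp {a B : ℝ} (ha : 0 < a) (hT : 0 ≤ T)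
    (hf : IntegrableOn f (Ioi 0)) (h1 : ∀ t ∈ Ioi (0 : ℝ), f t ≤ 1)
    (hexp : ∀ t ∈ Ioi (0 : ℝ), f t ≤ B * exp (-a * t)) :
    ∫ t in Ioi 0, f t ≤ T + B * exp (-a * T) / a := by
  rw [← Ioc_union_Ioi_eq_Ioi hT, setIntegral_union (Ioc_disjoint_Ioi le_rfl) measurableSet_Ioi
    (hf.mono_set Ioc_subset_Ioi_self) (hf.mono_set (Ioi_subset_Ioi hT))]
  gcongr
  · calc ∫ t in Ioc 0 T, f t ≤ ∫ _ in Ioc 0 T, (1 : ℝ) :=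
          setIntegral_mono_on (hf.mono_set Ioc_subset_Ioi_self)
            (integrableOn_const measure_Ioc_lt_top.ne) measurableSet_Ioc
            fun t ht => h1 t ht.1
      _ = T := by simp [hT]
  · have hint := (integrableOn_exp_mul_Ioi (neg_neg_iff_pos.2 ha) T).const_mul B
    calc ∫ t in Ioi T, f t ≤ ∫ t in Ioi T, B * exp (-a * t) :=
          setIntegral_mono_on (hf.mono_set (Ioi_subset_Ioi hT)) hint measurableSet_Ioi
            fun t ht => hexp t (hT.trans_lt ht)
      _ = B * exp (-a * T) / a := by
          rw [integral_const_mul, integral_exp_mul_Ioi (neg_neg_iff_pos.2 ha), div_neg, neg_div,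
            neg_neg, mul_div_assoc]

lemma mul_le_integral_Ioi {c : ℝ} (hT : 0 ≤ T) (hf : IntegrableOn f (Ioi 0))
    (h0 : ∀ t ∈ Ioi (0 : ℝ), 0 ≤ f t) (hc : ∀ t ∈ Ioc 0 T, c ≤ f t) :
    T * c ≤ ∫ t in Ioi 0, f t :=
  calc T * c = ∫ _ in Ioc 0 T, c := by simp [hT]
    _ ≤ ∫ t in Ioc 0 T, f t :=
        setIntegral_mono_on (integrableOn_const measure_Ioc_lt_top.ne)
          (hf.mono_set Ioc_subset_Ioi_self) measurableSet_Ioc hc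
    _ ≤ ∫ t in Ioi 0, f t :=
        setIntegral_mono_set hf ((ae_restrict_iff' measurableSet_Ioi).2 (.of_forall h0))
          (.of_forall Ioc_subset_Ioi_self)

end integral

section constantDeck

variable {m : ℕ}

lemma maxCDF_const (m n : ℕ) (t : ℝ) :
    maxCDF (fun _ : Fin n => m) t = (1 - erlangTail m t) ^ n := by
  simp [maxCDF]

lemma deckValue_const_le {c : ℝ} (hc : 1 < c) :
    ∃ K, ∀ n : ℕ, 0 < n → deckValue (fun _ : Fin n => m) ≤ c * log n + K := by
  set C := ∑ j ∈ range m, (1 - c⁻¹)⁻¹ ^ j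
  have hc0 : 0 < c := zero_lt_one.trans hc
  refine ⟨C * c, fun n hn => ?_⟩
  have hn' : (0 : ℝ) < n := Nat.cast_pos.2 hn
  have hexp (t : ℝ) (ht : 0 < t) :
      1 - maxCDF (fun _ : Fin n => m) t ≤ n * C * exp (-c⁻¹ * t) :=
    calc 1 - maxCDF (fun _ : Fin n => m) t ≤ n * erlangTail m t := by
          simpa using one_sub_maxCDF_le_sum (d := fun _ : Fin n => m) (le_of_lt ht)
      _ ≤ n * (C * exp (-c⁻¹ * t)) :=
          mul_le_mul_of_nonneg_left (erlangTail_le_exp (inv_lt_one_of_one_lt₀ hc) (le_of_lt ht))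
            hn'.le
      _ = n * C * exp (-c⁻¹ * t) := by ring
  refine (integral_Ioi_le_add_of_le_exp (inv_pos.2 hc0)
    (mul_nonneg hc0.le (log_natCast_nonneg n)) (integrableOn_one_sub_maxCDF _)
    (fun t ht => sub_le_self _ (maxCDF_nonneg (le_of_lt ht))) hexp).trans_eq ?_
  rw [neg_mul, inv_mul_cancel_left₀ hc0.ne', exp_neg, exp_log hn']
  field_simp

lemma deckValue_const_ge (hm : 0 < m) (n : ℕ) {T : ℝ} (hT : 0 ≤ T) :
    T * (1 - exp (-(n * exp (-T)))) ≤ deckValue (fun _ : Fin n => m) := by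
  refine mul_le_integral_Ioi hT (integrableOn_one_sub_maxCDF _)
    (fun t ht => sub_nonneg.2 (maxCDF_le_one (le_of_lt ht))) fun t ht => ?_
  have hle : 1 - erlangTail m t ≤ 1 - exp (-T) := by
    have := erlangTail_mono (Nat.one_le_iff_ne_zero.2 hm.ne') ht.1.le
    rw [erlangTail_one_left] at this
    linarith [exp_le_exp.2 (neg_le_neg ht.2)]
  have hpow : (1 - erlangTail m t) ^ n ≤ exp (-(n * exp (-T))) :=
    calc (1 - erlangTail m t) ^ n ≤ (1 - exp (-T)) ^ n :=
          pow_le_pow_left₀ (sub_nonneg.2 (erlangTail_le_one ht.1.le)) hle n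
      _ ≤ exp (-exp (-T)) ^ n :=
          pow_le_pow_left₀ (sub_nonneg.2 (exp_le_one_iff.2 (neg_nonpos.2 hT)))
            (one_sub_le_exp_neg _) n
      _ = exp (-(n * exp (-T))) := by rw [← exp_nat_mul, mul_neg]
  rw [maxCDF_const]
  linarith

lemma eventually_mul_log_lt_deckValue_const (hm : 0 < m) {a : ℝ} (ha : a < 1) :
    ∀ᶠ n : ℕ in atTop, a * log n < deckValue (fun _ : Fin n => m) := by
  obtain ⟨L, hLa, hL⟩ : ∃ L : ℝ, a < 1 - exp (-L) ∧ 1 ≤ L :=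
    (((tendsto_exp_neg_atTop_nhds_zero.const_sub 1).eventually
      (lt_mem_nhds (by rwa [sub_zero]))).and (eventually_ge_atTop 1)).exists
  set q := 1 - exp (-L)
  have hlogL : 0 ≤ log L := log_nonneg hL
  filter_upwards [eventually_gt_atTop 0,
    (tendsto_log_atTop.comp tendsto_natCast_atTop_atTop).eventually_gt_atTop
      (max (log L) (q * log L / (q - a)))] with n hn0 hn
  rw [Function.comp_apply, max_lt_iff, div_lt_iff₀ (sub_pos.2 hLa)] at hn
  have hT : (n : ℝ) * exp (-(log n - log L)) = L := by
    rw [neg_sub, exp_sub, exp_log (Nat.cast_pos.2 hn0), exp_log (zero_lt_one.trans_le hL)]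
    field_simp
  have := deckValue_const_ge hm n (sub_nonneg.2 hn.1.le)
  rw [hT] at this
  nlinarith

lemma eventually_deckValue_const_lt_mul_log {b : ℝ} (hb : 1 < b) :
    ∀ᶠ n : ℕ in atTop, deckValue (fun _ : Fin n => m) < b * log n := by
  obtain ⟨K, hK⟩ := deckValue_const_le (m := m) (c := (1 + b) / 2) (by linarith)
  filter_upwards [eventually_gt_atTop 0,
    (tendsto_log_atTop.comp tendsto_natCast_atTop_atTop).eventually_gt_atTop
      (K / ((b - 1) / 2))] with n hn hlog
  rw [Function.comp_apply, div_lt_iff₀ (by linarith)] at hlog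
  linarith [hK n hn]

lemma tendsto_deckValue_const_div_log (hm : 0 < m) :
    Tendsto (fun n : ℕ => deckValue (fun _ : Fin n => m) / log n) atTop (𝓝 1) := by
  have hlog := (tendsto_log_atTop.comp tendsto_natCast_atTop_atTop).eventually_gt_atTop 0
  refine tendsto_order.2 ⟨fun a ha => ?_, fun b hb => ?_⟩
  · filter_upwards [eventually_mul_log_lt_deckValue_const hm ha, hlog] with n h hn
    exact (lt_div_iff₀ hn).2 h
  · filter_upwards [eventually_deckValue_const_lt_mul_log hb, hlog] with n h hn
    exact (div_lt_iff₀ hn).2 h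

end constantDeck

/-- for fixed `m`, `min_S max_G E[C_{m,n}(G,S)] = max_G E[C_{m,n}(G,greedy)]`,
and this quantity is asymptotic to `log n` as `n → ∞`. -/
theorem stmt19 (m : ℕ) (hm : 0 < m) :
    (∀ n : ℕ, fopt (fun _ : Fin n => m) = fval greedy (fun _ : Fin n => m)) ∧
    Asymptotics.IsEquivalent Filter.atTop
      (fun n : ℕ => fval greedy (fun _ : Fin n => m))
      (fun n : ℕ => Real.log n) := by
  refine ⟨fun n => fopt_eq_fval_greedy _, ?_⟩
  simp only [fval_greedy]
  exact Asymptotics.isEquivalent_of_tendsto_one (tendsto_deckValue_const_div_log hm)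
end
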